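/- arXiv:1901.08230 — 10 statements merged into one kernel-verified Lean document; each statement's English description precedes it below -/
import Mathlib

section
/- Let m be a positive integer with m ≡ 0 (mod 4) and m ≥ 4. Then gcd(3^(m/2) + 5, 3^m - 1) = 2. -/
theorem stmt_0 (m : ℕ) (hm : 0 < m) (hmod : m % 4 = 0) (hge : 4 ≤ m) :
    Nat.gcd (3 ^ (m / 2) + 5) (3 ^ m - 1) = 2 := by
  obtain ⟨t, rfl⟩ : ∃ t, m = 4 * t := ⟨m / 4, by omega⟩
  have ht : 1 ≤ t := by omega
  have hdiv : 4 * t / 2 = 2 * t := by omega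
  rw [hdiv]
  set d := Nat.gcd (3 ^ (2 * t) + 5) (3 ^ (4 * t) - 1) with hd
  have hd1 : d ∣ 3 ^ (2 * t) + 5 := Nat.gcd_dvd_left _ _
  have hd2 : d ∣ 3 ^ (4 * t) - 1 := Nat.gcd_dvd_right _ _
  have hpow : 1 ≤ 3 ^ (4 * t) := Nat.one_le_pow _ _ (by norm_num)
  -- d ∣ 24
  have h24 : d ∣ 24 := by
    have hz1 : (d : ℤ) ∣ (3 : ℤ) ^ (2 * t) + 5 := by exact_mod_cast hd1
    have hz2 : (d : ℤ) ∣ (3 : ℤ) ^ (4 * t) - 1 := by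
      have := Int.natCast_dvd_natCast.mpr hd2
      rw [Nat.cast_sub hpow] at this
      push_cast at this
      exact_mod_cast this
    have hz : (d : ℤ) ∣ 24 := by
      have he : (24 : ℤ) = ((3:ℤ) ^ (4 * t) - 1) - ((3:ℤ) ^ (2 * t) + 5) * ((3:ℤ) ^ (2 * t) - 5) := by
        rw [show 4 * t = 2 * t + 2 * t by ring, pow_add]; ring
      rw [he]
      exact dvd_sub hz2 (hz1.mul_right _)
    exact_mod_cast hz
  -- 2 ∣ d
  have hodd1 : 3 ^ (2 * t) % 2 = 1 := by rw [Nat.pow_mod]; norm_num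
  have hodd2 : 3 ^ (4 * t) % 2 = 1 := by rw [Nat.pow_mod]; norm_num
  have h2 : 2 ∣ d := Nat.dvd_gcd (by omega) (by omega)
  -- ¬ 3 ∣ d
  have hn3 : ¬ 3 ∣ d := by
    intro h
    have h5 : 3 ∣ 3 ^ (2 * t) + 5 := h.trans hd1
    have h6 : 3 ∣ 3 ^ (2 * t) := dvd_pow_self 3 (by omega)
    omega
  -- ¬ 4 ∣ d
  have h9 : (3 : ℕ) ^ (2 * t) = 9 ^ t := by rw [pow_mul]; norm_num
  have h9m : (9 : ℕ) ^ t % 4 = 1 := by rw [Nat.pow_mod]; norm_num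
  have hn4 : ¬ 4 ∣ d := by
    intro h
    have h5 : 4 ∣ 3 ^ (2 * t) + 5 := h.trans hd1
    rw [h9] at h5
    omega
  have hle : d ≤ 24 := Nat.le_of_dvd (by norm_num) h24
  interval_cases d <;> omega
end

section
/- Let m be a positive integer with m ≡ 2 (mod 4) and m ≥ 6. Then gcd(3^((m+2)/2) + 5, 3^m - 1) = 2. -/
theorem stmt_1 (m : ℕ) (hm : 0 < m) (hmod : m % 4 = 2) (hge : 6 ≤ m) :
    Nat.gcd (3 ^ ((m + 2) / 2) + 5) (3 ^ m - 1) = 2 := by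
  obtain ⟨k, rfl⟩ : ∃ k, m = 4 * k + 2 := ⟨m / 4, by omega⟩
  have h2 : (4 * k + 2 + 2) / 2 = 2 * k + 2 := by omega
  rw [h2]
  set x := 3 ^ (2 * k + 1) with hx
  have hx9 : x = 9 ^ k * 3 := by
    rw [hx, pow_succ, pow_mul]; norm_num
  have h9k : 9 ^ k % 8 = 1 := by
    rw [Nat.pow_mod]; simp
  have hxm : x % 8 = 3 := by omega
  have hxge : 3 ≤ x := by omega
  have ha : 3 ^ (2 * k + 2) + 5 = 3 * x + 5 := by
    rw [hx, pow_succ]; ring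
  have hxs : x ^ 2 = 3 ^ (4 * k + 2) := by
    rw [hx, ← pow_mul]; congr 1; ring
  have hN : 3 ^ (4 * k + 2) - 1 = x ^ 2 - 1 := by rw [hxs]
  rw [ha, hN]
  set d := Nat.gcd (3 * x + 5) (x ^ 2 - 1) with hd
  have hd1 : d ∣ 3 * x + 5 := Nat.gcd_dvd_left _ _
  have hd2 : d ∣ x ^ 2 - 1 := Nat.gcd_dvd_right _ _
  have hx2ge : 1 ≤ x ^ 2 := Nat.one_le_pow _ _ (by omega)
  have hdz1 : (d : ℤ) ∣ 3 * (x : ℤ) + 5 := by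
    have := Int.natCast_dvd_natCast.mpr hd1
    push_cast at this
    exact this
  have hdz2 : (d : ℤ) ∣ (x : ℤ) ^ 2 - 1 := by
    have := Int.natCast_dvd_natCast.mpr hd2
    rwa [Nat.cast_sub hx2ge] at this
    
  have h16z : (d : ℤ) ∣ 16 := by
    have h := dvd_sub (hdz2.mul_left 9) (hdz1.mul_right (3 * (x : ℤ) - 5))
    have he : 9 * ((x : ℤ) ^ 2 - 1) - (3 * (x : ℤ) + 5) * (3 * (x : ℤ) - 5) = 16 := by
      ring
    rwa [he] at h
  have h16 : d ∣ 16 := by exact_mod_cast h16z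
  have h2d : 2 ∣ d := by
    apply Nat.dvd_gcd
    · omega
    · have : x ^ 2 % 8 = 1 := by
        rw [Nat.pow_mod, hxm]
      omega
  have hmod4 : (3 * x + 5) % 4 = 2 := by omega
  obtain ⟨f, hf⟩ := hd1
  have hdle : d ≤ 16 := Nat.le_of_dvd (by norm_num) h16
  have hdpos : 1 ≤ d := by
    rw [hd]
    exact Nat.gcd_pos_of_pos_left _ (by omega)
  clear_value d
  clear hd hdz1 hdz2 h16z hd2
  interval_cases d <;> omega
end

section
/- Let m be a positive integer with m ≡ 0 (mod 4) and m ≥ 4, let h = m/2 and e = 3^h + 5. Then e does not belong to the 3-cyclotomic coset C_1 modulo 3^m - 1, and the 3-cyclotomic coset C_e modulo 3^m - 1 has cardinality exactly m. -/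
/-- Helper: compute `v % (M-1)` when `v + k = r + k*M` and `r` is small. -/
lemma mod_helper (v r k M : ℕ) (hvk : v + k = r + k * M) (hr : r + 2 ≤ M) :
    v % (M - 1) = r := by
  have h1 : k * ((M - 1) + 1) = k * M := by congr 1; omega
  rw [Nat.mul_add, Nat.mul_one] at h1
  have hv : v = r + k * (M - 1) := by omega
  rw [hv, Nat.add_mul_mod_self_right, Nat.mod_eq_of_lt (by omega)]

lemma key (h d : ℕ) (hh2 : 2 ≤ h) (hd1 : 1 ≤ d) (hd2 : d < 2 * h) :
    3 ^ h + 5 < ((3 ^ h + 5) * 3 ^ d) % (3 ^ (2 * h) - 1) := by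
  have hP9 : (9 : ℕ) ≤ 3 ^ h := by
    calc (9 : ℕ) = 3 ^ 2 := by norm_num
    _ ≤ 3 ^ h := Nat.pow_le_pow_right (by norm_num) hh2
  have hP2 : (3 : ℕ) ^ (2 * h) = 3 ^ h * 3 ^ h := by rw [two_mul, pow_add]
  set P := (3 : ℕ) ^ h with hP
  rcases lt_trichotomy d h with hdh | rfl | hdh
  · -- d < h
    set Q := (3 : ℕ) ^ d with hQ
    have hQ3 : 3 ≤ Q := by
      calc (3 : ℕ) = 3 ^ 1 := by norm_num
      _ ≤ 3 ^ d := Nat.pow_le_pow_right (by norm_num) hd1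
    have h3Q : 3 * Q ≤ P := by
      rw [hQ, hP, ← pow_succ']
      exact Nat.pow_le_pow_right (by norm_num) (by omega)
    rw [hP2]
    have := mod_helper ((P + 5) * Q) ((P + 5) * Q) 0 (P * P) (by ring) (by nlinarith)
    rw [this]
    nlinarith
  · -- d = h
    rw [hP2]
    have := mod_helper ((P + 5) * P) (5 * P + 1) 1 (P * P) (by ring) (by nlinarith)
    rw [this]
    omega
  · -- d > h
    obtain ⟨t, rfl⟩ : ∃ t, d = h + t := ⟨d - h, by omega⟩
    have ht1 : 1 ≤ t := by omega
    have ht2 : t ≤ h - 1 := by omega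
    set Q := (3 : ℕ) ^ t with hQ
    have hQ3 : 3 ≤ Q := by
      calc (3 : ℕ) = 3 ^ 1 := by norm_num
      _ ≤ 3 ^ t := Nat.pow_le_pow_right (by norm_num) ht1
    have hpow : (3 : ℕ) ^ (h + t) = P * Q := by rw [pow_add]
    rw [hP2, hpow]
    rcases Nat.lt_or_ge t (h - 1) with htlt | htge
    · -- t ≤ h - 2
      have h9Q : 9 * Q ≤ P := by
        have : (3 : ℕ) ^ (t + 2) ≤ 3 ^ h := Nat.pow_le_pow_right (by norm_num) (by omega)
        calc 9 * Q = 3 ^ (t + 2) := by rw [hQ, pow_add]; ring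
        _ ≤ P := this
      have := mod_helper ((P + 5) * (P * Q)) (Q + 5 * (P * Q)) Q (P * P)
        (by ring) (by nlinarith)
      rw [this]
      nlinarith
    · -- t = h - 1, so P = 3 * Q
      have hP3Q : P = 3 * Q := by
        rw [hP, hQ, ← pow_succ']
        congr 1
        omega
      rw [hP3Q]
      have := mod_helper ((3 * Q + 5) * (3 * Q * Q)) (Q + 1 + 2 * (3 * Q) * Q) (Q + 1)
        ((3 * Q) * (3 * Q)) (by ring) (by nlinarith)
      rw [this]
      nlinarith

theorem stmt_2 (m : ℕ) (hm : 0 < m) (hmod : m % 4 = 0) (hge : 4 ≤ m)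
    (h e : ℕ) (hh : h = m / 2) (he : e = 3 ^ h + 5) :
    e ∉ (Finset.range m).image (fun s => (1 * 3 ^ s) % (3 ^ m - 1)) ∧
    ((Finset.range m).image (fun s => (e * 3 ^ s) % (3 ^ m - 1))).card = m := by
  subst he
  have hm2 : m = 2 * h := by omega
  subst hm2
  have hh2 : 2 ≤ h := by omega
  have hP9 : (9 : ℕ) ≤ 3 ^ h := by
    calc (9 : ℕ) = 3 ^ 2 := by norm_num
    _ ≤ 3 ^ h := Nat.pow_le_pow_right (by norm_num) hh2
  have hone : 1 ≤ (3 : ℕ) ^ (2 * h) := Nat.one_le_pow _ _ (by norm_num)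
  have hN1 : (3 : ℕ) ^ (2 * h) = (3 ^ (2 * h) - 1) + 1 := by omega
  constructor
  · -- e not in C_1
    intro hmem
    obtain ⟨s, hs, hseq⟩ := Finset.mem_image.mp hmem
    rw [Finset.mem_range] at hs
    rw [one_mul] at hseq
    have hslt : (3 : ℕ) ^ s < 3 ^ (2 * h) - 1 := by
      have h1 : (3 : ℕ) ^ s ≤ 3 ^ (2 * h - 1) := Nat.pow_le_pow_right (by norm_num) (by omega)
      have h2 : 3 * 3 ^ (2 * h - 1) = 3 ^ (2 * h) := by
        rw [← pow_succ']; congr 1; omega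
      have h3 : 1 ≤ (3 : ℕ) ^ (2 * h - 1) := Nat.one_le_pow _ _ (by norm_num)
      omega
    rw [Nat.mod_eq_of_lt hslt] at hseq
    rcases Nat.lt_or_ge s 2 with hs2 | hs2
    · have hle : (3 : ℕ) ^ s ≤ 3 := by interval_cases s <;> norm_num
      omega
    · have h9s : (9 : ℕ) ∣ 3 ^ s := by
        have : (3 : ℕ) ^ 2 ∣ 3 ^ s := pow_dvd_pow 3 hs2
        simpa using this
      have h9h : (9 : ℕ) ∣ 3 ^ h := by
        have : (3 : ℕ) ^ 2 ∣ 3 ^ h := pow_dvd_pow 3 hh2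
        simpa using this
      omega
  · -- card = m
    rw [Finset.card_image_of_injOn, Finset.card_range]
    have h3m : (3 : ZMod (3 ^ (2 * h) - 1)) ^ (2 * h) = 1 := by
      have h1 : (((3 : ℕ) ^ (2 * h) : ℕ) : ZMod (3 ^ (2 * h) - 1)) =
          (((3 ^ (2 * h) - 1) + 1 : ℕ) : ZMod (3 ^ (2 * h) - 1)) := by rw [← hN1]
      push_cast at h1
      rwa [ZMod.natCast_self, zero_add] at h1
    have main : ∀ s t : ℕ, s < 2 * h → t < 2 * h → s < t →
        (3 ^ h + 5) * 3 ^ s % (3 ^ (2 * h) - 1) ≠ (3 ^ h + 5) * 3 ^ t % (3 ^ (2 * h) - 1) := by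
      intro s t hs ht hlt hst
      have hkey := key h (t - s) hh2 (by omega) (by omega)
      -- cast equality into ZMod
      have hz : (((3 ^ h + 5) * 3 ^ s : ℕ) : ZMod (3 ^ (2 * h) - 1)) =
          (((3 ^ h + 5) * 3 ^ t : ℕ) : ZMod (3 ^ (2 * h) - 1)) := by
        rw [← ZMod.natCast_mod ((3 ^ h + 5) * 3 ^ s), ← ZMod.natCast_mod ((3 ^ h + 5) * 3 ^ t), hst]
      push_cast at hz
      -- multiply both sides by 3^(m-t) * 3^(t-s)
      have e1 : (3 : ZMod (3 ^ (2 * h) - 1)) ^ s * ((3 : ZMod (3 ^ (2 * h) - 1)) ^ (2 * h - t) *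
          (3 : ZMod (3 ^ (2 * h) - 1)) ^ (t - s)) = 1 := by
        rw [← pow_add, ← pow_add]
        have : s + (2 * h - t + (t - s)) = 2 * h := by omega
        rw [this, h3m]
      have e2 : (3 : ZMod (3 ^ (2 * h) - 1)) ^ t * ((3 : ZMod (3 ^ (2 * h) - 1)) ^ (2 * h - t) *
          (3 : ZMod (3 ^ (2 * h) - 1)) ^ (t - s)) = (3 : ZMod (3 ^ (2 * h) - 1)) ^ (t - s) := by
        rw [← pow_add, ← pow_add]
        have h4 : t + (2 * h - t + (t - s)) = 2 * h + (t - s) := by omega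
        rw [h4, pow_add, h3m, one_mul]
      have hz2 : ((3 : ZMod (3 ^ (2 * h) - 1)) ^ h + 5) =
          ((3 : ZMod (3 ^ (2 * h) - 1)) ^ h + 5) * (3 : ZMod (3 ^ (2 * h) - 1)) ^ (t - s) := by
        calc ((3 : ZMod (3 ^ (2 * h) - 1)) ^ h + 5)
            = ((3 : ZMod (3 ^ (2 * h) - 1)) ^ h + 5) * ((3 : ZMod (3 ^ (2 * h) - 1)) ^ s *
              ((3 : ZMod (3 ^ (2 * h) - 1)) ^ (2 * h - t) *
               (3 : ZMod (3 ^ (2 * h) - 1)) ^ (t - s))) := by rw [e1, mul_one]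
          _ = ((3 : ZMod (3 ^ (2 * h) - 1)) ^ h + 5) * (3 : ZMod (3 ^ (2 * h) - 1)) ^ s *
              ((3 : ZMod (3 ^ (2 * h) - 1)) ^ (2 * h - t) *
               (3 : ZMod (3 ^ (2 * h) - 1)) ^ (t - s)) := by ring
          _ = ((3 : ZMod (3 ^ (2 * h) - 1)) ^ h + 5) * (3 : ZMod (3 ^ (2 * h) - 1)) ^ t *
              ((3 : ZMod (3 ^ (2 * h) - 1)) ^ (2 * h - t) *
               (3 : ZMod (3 ^ (2 * h) - 1)) ^ (t - s)) := by rw [hz]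
          _ = ((3 : ZMod (3 ^ (2 * h) - 1)) ^ h + 5) * ((3 : ZMod (3 ^ (2 * h) - 1)) ^ t *
              ((3 : ZMod (3 ^ (2 * h) - 1)) ^ (2 * h - t) *
               (3 : ZMod (3 ^ (2 * h) - 1)) ^ (t - s))) := by ring
          _ = ((3 : ZMod (3 ^ (2 * h) - 1)) ^ h + 5) * (3 : ZMod (3 ^ (2 * h) - 1)) ^ (t - s) := by
              rw [e2]
      -- back to ℕ
      have hz3 : (((3 ^ h + 5) : ℕ) : ZMod (3 ^ (2 * h) - 1)) =
          (((3 ^ h + 5) * 3 ^ (t - s) : ℕ) : ZMod (3 ^ (2 * h) - 1)) := by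
        push_cast
        exact hz2
      have hmodeq := (ZMod.natCast_eq_natCast_iff _ _ _).mp hz3
      have h5 : (3 ^ h + 5) % (3 ^ (2 * h) - 1) = ((3 ^ h + 5) * 3 ^ (t - s)) % (3 ^ (2 * h) - 1) :=
        hmodeq
      have h6 : (3 ^ h + 5) % (3 ^ (2 * h) - 1) ≤ 3 ^ h + 5 := Nat.mod_le _ _
      omega
    intro s hs t ht hst
    simp only [Finset.coe_range, Set.mem_Iio] at hs ht
    dsimp only at hst
    rcases Nat.lt_trichotomy s t with hc | hc | hc
    · exact absurd hst (main s t hs ht hc)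
    · exact hc
    · exact absurd hst.symm (main t s ht hs hc)
end

section
/- Let m be a positive integer with m ≡ 2 (mod 4) and m ≥ 6, let h = (m+2)/2 and e = 3^h + 5. Then e does not belong to the 3-cyclotomic coset C_1 modulo 3^m - 1, and the 3-cyclotomic coset C_e modulo 3^m - 1 has cardinality exactly m. -/
/-!
Write `e = 3 ^ h + 5 = 3 ^ h + 3 + 2` in base 3: its digits are `2` at position `0` and `1` at
positions `1` and `h`. Since `3 ^ m ≡ 1` modulo `3 ^ m - 1`, multiplying by `3 ^ s` rotates these
digits cyclically, so the residue of `e * 3 ^ s` is `2 * 3 ^ s + 3 ^ ((s + 1) % m) + 3 ^ ((s + h) % m)`,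
a number below `3 ^ m - 1` whose only digit `2` sits at position `s`. Hence the `m` residues are
distinct. And `e ≡ 2 (mod 3)` while every power of `3` is `≡ 0` or `1`, so `e ∉ C_1`.
Nothing changes for a base `q ≥ 3`, `e = q ^ h + q + 2` and `2 ≤ h < m`.
-/

open Finset

namespace Nat

variable {q : ℕ} {g : ℕ → ℕ}

theorem sum_mul_pow_lt (hg : ∀ i, g i < q) (n : ℕ) : ∑ i ∈ range n, g i * q ^ i < q ^ n := by
  induction n with
  | zero => simp
  | succ n ih =>
    have hlast : (g n + 1) * q ^ n ≤ q * q ^ n := Nat.mul_le_mul_right _ (hg n)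
    rw [sum_range_succ, pow_succ']
    linarith

theorem sum_mul_pow_div_pow_mod (hg : ∀ i, g i < q) {w n : ℕ} (hw : w < n) :
    (∑ i ∈ range n, g i * q ^ i) / q ^ w % q = g w := by
  have hq : 0 < q := (Nat.zero_le _).trans_lt (hg 0)
  induction n, hw using Nat.le_induction with
  | base =>
    rw [sum_range_succ, Nat.add_mul_div_right _ _ (pow_pos hq w),
      Nat.div_eq_of_lt (sum_mul_pow_lt hg w), zero_add, Nat.mod_eq_of_lt (hg w)]
  | succ n hwn ih =>
    obtain ⟨k, rfl⟩ := Nat.exists_eq_add_of_lt hwn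
    have hsplit : g (w + k + 1) * q ^ (w + k + 1) = (g (w + k + 1) * q ^ k) * q * q ^ w := by ring
    rw [sum_range_succ, hsplit, Nat.add_mul_div_right _ _ (pow_pos hq w), Nat.add_mul_mod_self_right,
      ih]

theorem pow_modEq_pow_mod (hq : 0 < q) (m k : ℕ) : q ^ k ≡ q ^ (k % m) [MOD q ^ m - 1] := by
  have hqm : q ^ m ≡ 1 [MOD q ^ m - 1] := Nat.modEq_sub (Nat.one_le_pow _ _ hq)
  conv_lhs => rw [← Nat.div_add_mod k m, pow_add, pow_mul]
  simpa using (hqm.pow (k / m)).mul_right (q ^ (k % m))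

theorem pow_sub_one_eq_sum (hq : 0 < q) (n : ℕ) : q ^ n - 1 = ∑ i ∈ range n, (q - 1) * q ^ i := by
  have := geom_sum_mul_add (q - 1) n
  rw [Nat.sub_add_cancel (show 1 ≤ q from hq)] at this
  rw [← this, Nat.add_sub_cancel, sum_mul]
  exact sum_congr rfl fun i _ => mul_comm _ _

theorem add_mod_ne_add_mod {m i j : ℕ} (s : ℕ) (hi : i < m) (hj : j < m) (hij : i ≠ j) :
    (s + i) % m ≠ (s + j) % m :=
  fun h => hij ((Nat.ModEq.add_left_cancel' s h).eq_of_lt_of_lt hi hj)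

theorem add_mod_distinct {m s h : ℕ} (hs : s < m) (hh : 2 ≤ h) (hhm : h < m) :
    s ≠ (s + 1) % m ∧ s ≠ (s + h) % m ∧ (s + 1) % m ≠ (s + h) % m := by
  have hs0 : (s + 0) % m = s := Nat.mod_eq_of_lt hs
  refine ⟨?_, ?_, Nat.add_mod_ne_add_mod s (by omega) hhm (by omega)⟩ <;> nth_rewrite 1 [← hs0] <;>
    exact Nat.add_mod_ne_add_mod s (by omega) (by omega) (by omega)

theorem pow_lt_pow_sub_one {q s m : ℕ} (hq : 3 ≤ q) (hs : s < m) : q ^ s < q ^ m - 1 := by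
  have hle : q ^ (s + 1) ≤ q ^ m := Nat.pow_le_pow_right (by omega) hs
  have hdouble : q ^ s * 3 ≤ q ^ s * q := Nat.mul_le_mul_left _ hq
  have hpos : 1 ≤ q ^ s := Nat.one_le_pow _ _ (by omega)
  rw [pow_succ] at hle
  omega

end Nat

section TwoOneOneDigits

variable {q s a b : ℕ}

theorem two_mul_pow_add_pow_add_pow_eq_sum {n : ℕ} (hs : s < n) (ha : a < n) (hb : b < n) :
    2 * q ^ s + q ^ a + q ^ b =
      ∑ i ∈ range n, (Pi.single s 2 + Pi.single a 1 + Pi.single b 1 : ℕ → ℕ) i * q ^ i := by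
  simp [add_mul, sum_add_distrib, Pi.single_apply, hs, ha, hb]

theorem two_mul_pow_add_pow_add_pow_div_pow_mod (hq : 3 ≤ q) (hsa : s ≠ a) (hsb : s ≠ b)
    (hab : a ≠ b) (w : ℕ) :
    (2 * q ^ s + q ^ a + q ^ b) / q ^ w % q =
      (Pi.single s 2 + Pi.single a 1 + Pi.single b 1 : ℕ → ℕ) w := by
  have hdigit : ∀ i, (Pi.single s 2 + Pi.single a 1 + Pi.single b 1 : ℕ → ℕ) i < q := by
    intro i
    simp only [Pi.add_apply, Pi.single_apply]
    split_ifs <;> omega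
  rw [two_mul_pow_add_pow_add_pow_eq_sum (n := s + a + b + w + 1) (by omega) (by omega) (by omega)]
  exact Nat.sum_mul_pow_div_pow_mod hdigit (by omega)

theorem two_mul_pow_add_pow_add_pow_lt (hq : 3 ≤ q) (hsa : s ≠ a) (hsb : s ≠ b) (hab : a ≠ b)
    {n : ℕ} (hs : s < n) (ha : a < n) (hb : b < n) :
    2 * q ^ s + q ^ a + q ^ b < q ^ n - 1 := by
  have hlt : 2 * q ^ s + q ^ a + q ^ b < q ^ n := by
    rw [two_mul_pow_add_pow_add_pow_eq_sum hs ha hb]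
    refine Nat.sum_mul_pow_lt (fun i => ?_) n
    simp only [Pi.add_apply, Pi.single_apply]
    split_ifs <;> omega
  -- all base-`q` digits of `q ^ n - 1` are `q - 1 ≥ 2`, while the digit at `a` is `1`
  have hne : 2 * q ^ s + q ^ a + q ^ b ≠ q ^ n - 1 := by
    intro heq
    have hdigit := two_mul_pow_add_pow_add_pow_div_pow_mod hq hsa hsb hab a
    rw [heq, Nat.pow_sub_one_eq_sum (by omega), Nat.sum_mul_pow_div_pow_mod (fun _ => by omega) ha]
      at hdigit
    simp [hsa.symm, hab] at hdigit
    omega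
  omega

theorem eq_of_two_mul_pow_add_pow_add_pow_eq (hq : 3 ≤ q) (hsa : s ≠ a) (hsb : s ≠ b) (hab : a ≠ b)
    {t c d : ℕ} (htc : t ≠ c) (htd : t ≠ d) (hcd : c ≠ d)
    (heq : 2 * q ^ s + q ^ a + q ^ b = 2 * q ^ t + q ^ c + q ^ d) : s = t := by
  have hdigit := congrArg (· / q ^ s % q) heq
  simp only [two_mul_pow_add_pow_add_pow_div_pow_mod hq hsa hsb hab,
    two_mul_pow_add_pow_add_pow_div_pow_mod hq htc htd hcd] at hdigit
  simp only [Pi.add_apply, Pi.single_apply] at hdigit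
  split_ifs at hdigit <;> omega

end TwoOneOneDigits

def cyclotomicCoset (q m j : ℕ) : Finset ℕ :=
  (range m).image fun s => j * q ^ s % (q ^ m - 1)

section CosetOfPowAddAddTwo

variable {q m h : ℕ}

theorem pow_add_add_two_notMem_cyclotomicCoset_one (hq : 3 ≤ q) (hh : 0 < h) :
    q ^ h + q + 2 ∉ cyclotomicCoset q m 1 := by
  simp only [cyclotomicCoset, mem_image, mem_range, one_mul, not_exists, not_and]
  intro s hs heq
  rw [Nat.mod_eq_of_lt (Nat.pow_lt_pow_sub_one hq hs)] at heq
  cases s with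
  | zero => rw [pow_zero] at heq; omega
  | succ s =>
    have hdvd : q ∣ q ^ h + q + 2 := heq ▸ dvd_pow_self q s.succ_ne_zero
    have hq2 : q ∣ 2 := (Nat.dvd_add_right ((dvd_pow_self q hh.ne').add dvd_rfl)).mp hdvd
    have := Nat.le_of_dvd two_pos hq2
    omega

theorem pow_add_add_two_mul_pow_mod (hq : 3 ≤ q) (hh : 2 ≤ h) (hhm : h < m) {s : ℕ} (hs : s < m) :
    (q ^ h + q + 2) * q ^ s % (q ^ m - 1) = 2 * q ^ s + q ^ ((s + 1) % m) + q ^ ((s + h) % m) := by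
  have hcong : (q ^ h + q + 2) * q ^ s ≡ 2 * q ^ s + q ^ ((s + 1) % m) + q ^ ((s + h) % m)
      [MOD q ^ m - 1] := by
    have hexpand : (q ^ h + q + 2) * q ^ s = 2 * q ^ s + q ^ (s + 1) + q ^ (s + h) := by ring
    rw [hexpand]
    exact ((Nat.ModEq.refl _).add (Nat.pow_modEq_pow_mod (by omega) m _)).add
      (Nat.pow_modEq_pow_mod (by omega) m _)
  obtain ⟨hsa, hsb, hab⟩ := Nat.add_mod_distinct hs hh hhm
  rw [hcong, Nat.mod_eq_of_lt (two_mul_pow_add_pow_add_pow_lt hq hsa hsb hab hs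
    (Nat.mod_lt _ (by omega)) (Nat.mod_lt _ (by omega)))]

theorem card_cyclotomicCoset_pow_add_add_two (hq : 3 ≤ q) (hh : 2 ≤ h) (hhm : h < m) :
    (cyclotomicCoset q m (q ^ h + q + 2)).card = m := by
  rw [cyclotomicCoset, card_image_of_injOn, card_range]
  intro s hs t ht hst
  simp only [coe_range, Set.mem_Iio] at hs ht
  simp only [pow_add_add_two_mul_pow_mod hq hh hhm hs, pow_add_add_two_mul_pow_mod hq hh hhm ht]
    at hst
  obtain ⟨hsa, hsb, hab⟩ := Nat.add_mod_distinct hs hh hhm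
  obtain ⟨htc, htd, hcd⟩ := Nat.add_mod_distinct ht hh hhm
  exact eq_of_two_mul_pow_add_pow_add_pow_eq hq hsa hsb hab htc htd hcd hst

end CosetOfPowAddAddTwo

theorem stmt_3_general (m : ℕ) (hge : 6 ≤ m)
    (h e : ℕ) (hh : h = (m + 2) / 2) (he : e = 3 ^ h + 5) :
    e ∉ (Finset.range m).image (fun s => (1 * 3 ^ s) % (3 ^ m - 1)) ∧
    ((Finset.range m).image (fun s => (e * 3 ^ s) % (3 ^ m - 1))).card = m := by
  obtain rfl : e = 3 ^ h + 3 + 2 := he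
  exact ⟨pow_add_add_two_notMem_cyclotomicCoset_one le_rfl (by omega),
    card_cyclotomicCoset_pow_add_add_two le_rfl (by omega) (by omega)⟩

theorem stmt_3 (m : ℕ) (hm : 0 < m) (hmod : m % 4 = 2) (hge : 6 ≤ m)
    (h e : ℕ) (hh : h = (m + 2) / 2) (he : e = 3 ^ h + 5) :
    e ∉ (Finset.range m).image (fun s => (1 * 3 ^ s) % (3 ^ m - 1)) ∧
    ((Finset.range m).image (fun s => (e * 3 ^ s) % (3 ^ m - 1))).card = m :=
  stmt_3_general m hge h e hh he
end

section
/- Let m be a positive integer with m ≡ 0 (mod 4) and m ≥ 4, let h = m/2 and e = 3^h + 5. Then the only element x of the finite field GF(3^m) satisfying (x+1)^e - x^e - 1 = 0 is x = 0. -/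
set_option maxRecDepth 100000 in
set_option maxHeartbeats 4000000 in
theorem stmt_4 (m : ℕ) (hm : 0 < m) (hmod : m % 4 = 0) (hge : 4 ≤ m)
    (h e : ℕ) (hh : h = m / 2) (he : e = 3 ^ h + 5)
    (x : GaloisField 3 m) :
    (x + 1) ^ e - x ^ e - 1 = 0 ↔ x = 0 := by
  subst hh he
  constructor
  · intro E
    have h3 : (3 : GaloisField 3 m) = 0 := by
      exact_mod_cast CharP.cast_eq_zero (GaloisField 3 m) 3
    set y := x ^ (3:ℕ) ^ (m / 2) with hy
    have hx1 : (x + 1) ^ (3:ℕ) ^ (m / 2) = y + 1 := by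
      have h' := map_add (iterateFrobenius (GaloisField 3 m) 3 (m / 2)) x 1
      simpa [iterateFrobenius_def] using h'
    rw [pow_add, hx1] at E
    have rel1 : y*(2*x^4+x^3+x^2+2*x+1) + (x^5+2*x^4+x^3+x^2+2*x) = 0 := by
      linear_combination E - (y+1)*(x^4+3*x^3+3*x^2+x)*h3
    have hxm : x ^ (3:ℕ) ^ m = x := by
      haveI : Fintype (GaloisField 3 m) := Fintype.ofFinite _
      have hc : Fintype.card (GaloisField 3 m) = 3 ^ m := by
        rw [← Nat.card_eq_fintype_card]; exact GaloisField.card 3 m hm.ne'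
      calc x ^ (3:ℕ) ^ m = x ^ Fintype.card (GaloisField 3 m) := by rw [hc]
        _ = x := FiniteField.pow_card x
    have hfy : y ^ (3:ℕ) ^ (m / 2) = x := by
      rw [hy, ← pow_mul, ← pow_add, show m / 2 + m / 2 = m from by omega]
      exact hxm
    have rel2 : x*(2*y^4+y^3+y^2+2*y+1) + (y^5+2*y^4+y^3+y^2+2*y) = 0 := by
      have h' := congrArg (iterateFrobenius (GaloisField 3 m) 3 (m / 2)) rel1
      simp only [map_add, map_mul, map_pow, map_one, map_zero, map_ofNat,
        iterateFrobenius_def] at h'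
      rw [hfy, ← hy] at h'
      linear_combination h'
    have key : x^3*(x+1)*(x+2)*(1 + x^3 + 2*x^5 + x^6)*(1 + 2*x + x^3 + x^6)*(1 + 2*x + 2*x^3 + 2*x^5 + x^6) = 0 := by
      linear_combination (2 + y + y^2 + 2*y^3 + y^4 + x + x*y + 2*x*y^2 + x*y^3 + 2*x*y^4 + x^2 + 2*x^2*y + x^2*y^2 + 2*x^2*y^3 + x^2*y^4 + 2*x^3 + 2*x^3*y^2 + x^3*y^3 + 2*x^4 + 2*x^4*y + x^4*y^2 + 2*x^5*y^2 + x^5*y^3 + 2*x^5*y^4 + x^6 + 2*x^6*y + 2*x^6*y^2 + 2*x^6*y^3 + 2*x^7*y + x^8 + 2*x^8*y + x^8*y^2 + 2*x^8*y^3 + x^8*y^4 + x^9*y^2 + 2*x^9*y^3 + 2*x^9*y^4 + 2*x^10 + 2*x^10*y^2 + 2*x^10*y^3 + x^10*y^4 + 2*x^11 + x^11*y + 2*x^11*y^2 + 2*x^11*y^3 + x^11*y^4 + x^12 + x^12*y + x^12*y^2 + x^12*y^3 + x^13*y + 2*x^13*y^2 + 2*x^14 + x^14*y + x^14*y^3 +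 2*x^14*y^4 + 2*x^15 + x^15*y + 2*x^15*y^4 + 2*x^16*y^3 + x^16*y^4 + 2*x^17 + x^17*y + x^18)*rel1 - (2*x^4+x^3+x^2+2*x+1)^5*rel2 + ((-1)*x + 5*x*y + 2*x*y^2 + x*y^3 + 5*x*y^4 + 2*x*y^5 + 2*x^2 + 34*x^2*y + 15*x^2*y^2 + 15*x^2*y^3 + 33*x^2*y^4 + 13*x^2*y^5 + 14*x^3 + 109*x^3*y + 53*x^3*y^2 + 52*x^3*y^3 + 109*x^3*y^4 + 40*x^3*y^5 + 42*x^4 + 251*x^4*y + 123*x^4*y^2 + 122*x^4*y^3 + 252*x^4*y^4 + 85*x^4*y^5 + 90*x^5 + 482*x^5*y + 238*x^5*y^2 + 238*x^5*y^3 + 484*x^5*y^4 + 155*x^5*y^5 + 163*x^6 + 830*x^6*y + 411*x^6*y^2 + 411*x^6*y^3 + 829*x^6*y^4 + 258*x^6*y^5 + 269*x^7 + 1268*x^7*y + 630*x^7*y^2 + 630*x^7*y^3 + 1270*x^7*y^4 + 376*x^7*y^5 + 391*x^8 + 1718*x^8*y + 855*x^8*y^2 + 858*x^8*y^3 + 1721*x^8*y^4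 + 484*x^8*y^5 + 508*x^9 + 2139*x^9*y + 1066*x^9*y^2 + 1066*x^9*y^3 + 2138*x^9*y^4 + 584*x^9*y^5 + 623*x^10 + 2483*x^10*y + 1238*x^10*y^2 + 1237*x^10*y^3 + 2481*x^10*y^4 + 655*x^10*y^5 + 693*x^11 + 2619*x^11*y + 1307*x^11*y^2 + 1306*x^11*y^3 + 2619*x^11*y^4 + 653*x^11*y^5 + 691*x^12 + 2521*x^12*y + 1258*x^12*y^2 + 1256*x^12*y^3 + 2520*x^12*y^4 + 606*x^12*y^5 + 646*x^13 + 2293*x^13*y + 1144*x^13*y^2 + 1141*x^13*y^3 + 2291*x^13*y^4 + 538*x^13*y^5 + 575*x^14 + 1919*x^14*y + 956*x^14*y^2 + 955*x^14*y^3 + 1919*x^14*y^4 + 420*x^14*y^5 + 458*x^15 + 1425*x^15*y + 710*x^15*y^2 + 710*x^15*y^3 + 1426*x^15*y^4 + 291*x^15*y^5 + 323*x^16 + 989*x^16*y + 493*x^16*y^2 + 494*x^16*y^3 + 990*x^16*y^4 + 201*x^16*y^5 + 223*x^17 + 643*x^17*y + 320*x^17*y^2 + 320*x^17*y^3 + 643*x^17*y^4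 + 118*x^17*y^5 + 132*x^18 + 341*x^18*y + 171*x^18*y^2 + 172*x^18*y^3 + 343*x^18*y^4 + 51*x^18*y^5 + 60*x^19 + 156*x^19*y + 79*x^19*y^2 + 79*x^19*y^3 + 157*x^19*y^4 + 25*x^19*y^5 + 33*x^20 + 73*x^20*y + 37*x^20*y^2 + 36*x^20*y^3 + 72*x^20*y^4 + 10*x^20*y^5 + 15*x^21 + 19*x^21*y + 10*x^21*y^2 + 10*x^21*y^3 + 21*x^21*y^4 + x^22 + (-1)*x^22*y)*h3
    rcases mul_eq_zero.mp key with key | hs3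
    rcases mul_eq_zero.mp key with key | hs2
    rcases mul_eq_zero.mp key with key | hs1
    rcases mul_eq_zero.mp key with key | hx2
    rcases mul_eq_zero.mp key with key | hxn1
    -- x^3 = 0
    · exact pow_eq_zero_iff (by norm_num) |>.mp key
    -- x = -1
    · exfalso
      have hxv : x = -1 := by linear_combination hxn1
      have hyv : y = -1 := by
        rw [hy, hxv, Odd.neg_one_pow (Odd.pow (by decide : Odd 3))]
      exact one_ne_zero (α := GaloisField 3 m) (by
        linear_combination h3 + rel1 - (2*x^4+x^3+x^2+2*x+1)*hyv - (x^4-x^3+x^2-x+1)*hxv)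
    -- x = 1
    · exfalso
      have hxv : x = 1 := by linear_combination hx2 - h3
      have hyv : y = 1 := by rw [hy, hxv, one_pow]
      exact one_ne_zero (α := GaloisField 3 m) (by
        linear_combination 5*h3 - rel1 + (2*x^4+x^3+x^2+2*x+1)*hyv + (x^4+5*x^3+7*x^2+9*x+13)*hxv)
    -- sextic s1
    · exfalso
      have h9 : x ^ 9 = (2*x + 2*x^2 + 2*x^3 + 2*x^4 + 2*x^5) := by
        linear_combination (x + x^2 + x^3)*hs1 + ((-1)*x + (-1)*x^2 + (-1)*x^3 + (-1)*x^4 + (-1)*x^5 + (-1)*x^6 + (-1)*x^7 + (-1)*x^8)*h3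
      have h81 : x ^ 81 = (1 + x + x^4) := by
        rw [show (81:ℕ) = 9*9 from by norm_num, pow_mul, h9]
        linear_combination (2 + 2*x + x^3 + 2*x^5 + 2*x^6 + x^7 + 2*x^8 + 2*x^9 + x^10 + x^11 + 2*x^14 + 2*x^15 + 2*x^19 + x^21 + x^22 + x^24 + x^26 + x^27 + 2*x^28 + x^30 + 2*x^31 + 2*x^34 + x^35 + 2*x^37 + 2*x^38 + 2*x^39)*hs1 + ((-1) + (-1)*x + (-1)*x^3 + (-1)*x^4 + (-2)*x^5 + (-3)*x^6 + (-1)*x^7 + (-2)*x^8 + 169*x^9 + 1534*x^10 + 7677*x^11 + 28158*x^12 + 84478*x^13 + 218109*x^14 + 498686*x^15 + 1029119*x^16 + 1943039*x^17 + 3388586*x^18 + 5497342*x^19 + 8342014*x^20 + 11891199*x^21 + 15974399*x^22 + 20275200*x^23 + 24360958*x^24 + 27747839*x^25 + 29990399*x^26 + 30775465*x^27 + 29990399*x^28 + 27747839*x^29 + 24360959*x^30 + 20275198*x^31 + 15974399*x^32 + 11891198*x^33 + 8342014*x^34 + 5497343*x^35 + 3388585*x^36 + 1943038*x^37 + 1029119*x^38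 + 498686*x^39 + 218110*x^40 + 84479*x^41 + 28158*x^42 + 7678*x^43 + 1534*x^44 + 170*x^45)*h3
      have h729 : x ^ 729 = x := by
        rw [show (729:ℕ) = 81*9 from by norm_num, pow_mul, h81]
        linear_combination (1 + 2*x + 2*x^3 + x^4 + x^5 + 2*x^6 + x^8 + x^9 + x^13 + 2*x^15 + 2*x^16 + 2*x^18 + 2*x^20 + x^21 + x^22 + x^25 + 2*x^26 + x^28 + x^29 + x^30)*hs1 + (2*x + 12*x^2 + 27*x^3 + 44*x^4 + 65*x^5 + 109*x^6 + 179*x^7 + 223*x^8 + 250*x^9 + 335*x^10 + 442*x^11 + 450*x^12 + 419*x^13 + 503*x^14 + 571*x^15 + 461*x^16 + 378*x^17 + 446*x^18 + 419*x^19 + 250*x^20 + 207*x^21 + 251*x^22 + 166*x^23 + 69*x^24 + 82*x^25 + 82*x^26 + 27*x^27 + 11*x^28 + 23*x^29 + 11*x^30 + (-2)*x^31 + 2*x^32 + 2*x^33 + (-1)*x^34 + (-1)*x^35)*h3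
      have hbase : ∀ k : ℕ, x ^ (729:ℕ) ^ k = x := by
        intro k
        induction k with
        | zero => simp
        | succ n ih => rw [pow_succ, pow_mul, ih]; exact h729
      have hyr : y = x ^ (3:ℕ) ^ (m / 2 % 6) := by
        conv_lhs => rw [hy, show m / 2 = 6 * (m / 2 / 6) + m / 2 % 6 from by omega]
        rw [pow_add, show (3:ℕ) ^ (6 * (m / 2 / 6)) = 729 ^ (m / 2 / 6) from by
          rw [pow_mul]; norm_num, pow_mul, hbase]
      have hr : m / 2 % 6 = 0 ∨ m / 2 % 6 = 2 ∨ m / 2 % 6 = 4 := by omega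
      rcases hr with hr | hr | hr <;> rw [hr] at hyr <;> norm_num at hyr
      · exact one_ne_zero (α := GaloisField 3 m) (by
          linear_combination (1)*hs1 + (1 + 2*x^2 + x^3)*rel1 - (1 + 2*x + 3*x^2 + 6*x^3 + 6*x^4 + 3*x^5 + 5*x^6 + 2*x^7)*hyr + ((-1)*x + (-1)*x^2 + (-3)*x^3 + (-4)*x^4 + (-4)*x^5 + (-3)*x^6 + (-3)*x^7 + (-1)*x^8)*h3)
      · rw [h9] at hyr; exact one_ne_zero (α := GaloisField 3 m) (by
          linear_combination (1 + x^2 + 2*x^3 + 2*x^5 + 2*x^6 + 2*x^7 + x^8)*hs1 + (2*x + x^2 + 2*x^3 + 2*x^4 + 2*x^5)*rel1 - (2*x + 5*x^2 + 6*x^3 + 9*x^4 + 13*x^5 + 10*x^6 + 8*x^7 + 6*x^8 + 4*x^9)*hyr + ((-3)*x^2 + (-7)*x^3 + (-11)*x^4 + (-20)*x^5 + (-29)*x^6 + (-33)*x^7 + (-36)*x^8 + (-34)*x^9 + (-30)*x^10 + (-21)*x^11 + (-14)*x^12 + (-8)*x^13 + (-3)*x^14)*h3)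
      · rw [h81] at hyr; exact one_ne_zero (α := GaloisField 3 m) (by
          linear_combination (2 + x + x^2 + x^3 + x^4)*hs1 + (2 + x + x^2)*rel1 - (2 + 5*x + 5*x^2 + 5*x^3 + 6*x^4 + 3*x^5 + 2*x^6)*hyr + ((-1) + (-4)*x + (-5)*x^2 + (-6)*x^3 + (-7)*x^4 + (-8)*x^5 + (-6)*x^6 + (-4)*x^7 + (-3)*x^8 + (-2)*x^9 + (-1)*x^10)*h3)
    -- sextic s2
    · exfalso
      have h9 : x ^ 9 = (1 + 2*x + x^4) := by
        linear_combination (2 + x^3)*hs2 + ((-1) + (-2)*x + (-1)*x^3 + (-1)*x^4 + (-1)*x^6)*h3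
      have h81 : x ^ 81 = (x^2 + 2*x^3 + x^4) := by
        rw [show (81:ℕ) = 9*9 from by norm_num, pow_mul, h9]
        linear_combination (1 + x + x^4 + x^5 + x^7 + 2*x^9 + 2*x^11 + 2*x^13 + x^15 + 2*x^16 + 2*x^18 + x^19 + x^20 + x^21 + x^22 + x^25 + 2*x^27 + x^30)*hs2 + (5*x + 47*x^2 + 223*x^3 + 674*x^4 + 1391*x^5 + 2127*x^6 + 2879*x^7 + 4139*x^8 + 5714*x^9 + 6382*x^10 + 6431*x^11 + 7514*x^12 + 8399*x^13 + 7054*x^14 + 6015*x^15 + 6760*x^16 + 5794*x^17 + 3471*x^18 + 3357*x^19 + 3401*x^20 + 1678*x^21 + 1006*x^22 + 1343*x^23 + 699*x^24 + 167*x^25 + 335*x^26 + 223*x^27 + 10*x^28 + 48*x^29 + 47*x^30 + (-1)*x^31 + 3*x^32 + 5*x^33)*h3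
      have h729 : x ^ 729 = x := by
        rw [show (729:ℕ) = 81*9 from by norm_num, pow_mul, h81]
        linear_combination (2*x + 2*x^2 + 2*x^3 + x^5 + 2*x^6 + 2*x^9 + 2*x^10 + x^11 + x^13 + x^15 + x^16 + x^19 + x^20 + x^22 + x^25 + 2*x^27 + x^30)*hs2 + ((-1)*x + (-2)*x^2 + (-2)*x^3 + (-2)*x^4 + (-1)*x^5 + (-2)*x^6 + (-2)*x^7 + (-1)*x^8 + (-2)*x^9 + (-2)*x^10 + (-2)*x^11 + (-2)*x^12 + (-1)*x^13 + (-1)*x^14 + (-1)*x^15 + (-2)*x^16 + (-1)*x^17 + 5*x^19 + 50*x^20 + 271*x^21 + 1019*x^22 + 2855*x^23 + 6188*x^24 + 10607*x^25 + 14585*x^26 + 16206*x^27 + 14584*x^28 + 10608*x^29 + 6187*x^30 + 2855*x^31 + 1020*x^32 + 271*x^33 + 51*x^34 + 6*x^35)*h3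
      have hbase : ∀ k : ℕ, x ^ (729:ℕ) ^ k = x := by
        intro k
        induction k with
        | zero => simp
        | succ n ih => rw [pow_succ, pow_mul, ih]; exact h729
      have hyr : y = x ^ (3:ℕ) ^ (m / 2 % 6) := by
        conv_lhs => rw [hy, show m / 2 = 6 * (m / 2 / 6) + m / 2 % 6 from by omega]
        rw [pow_add, show (3:ℕ) ^ (6 * (m / 2 / 6)) = 729 ^ (m / 2 / 6) from by
          rw [pow_mul]; norm_num, pow_mul, hbase]
      have hr : m / 2 % 6 = 0 ∨ m / 2 % 6 = 2 ∨ m / 2 % 6 = 4 := by omega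
      rcases hr with hr | hr | hr <;> rw [hr] at hyr <;> norm_num at hyr
      · exact one_ne_zero (α := GaloisField 3 m) (by
          linear_combination (1 + x + x^2)*hs2 + (x + x^2 + x^3 + x^4 + x^5)*rel1 - (x + 3*x^2 + 4*x^3 + 5*x^4 + 7*x^5 + 6*x^6 + 4*x^7 + 3*x^8 + 2*x^9)*hyr + ((-1)*x + (-2)*x^2 + (-3)*x^3 + (-3)*x^4 + (-4)*x^5 + (-5)*x^6 + (-4)*x^7 + (-3)*x^8 + (-2)*x^9 + (-1)*x^10)*h3)
      · rw [h9] at hyr; exact one_ne_zero (α := GaloisField 3 m) (by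
          linear_combination (1 + 2*x^3 + x^5 + x^7)*hs2 + (x + x^4 + x^5)*rel1 - (x + 2*x^2 + x^3 + 2*x^4 + 5*x^5 + 3*x^6 + 2*x^7 + 3*x^8 + 2*x^9)*hyr + ((-1)*x + (-2)*x^2 + (-3)*x^3 + (-3)*x^4 + (-5)*x^5 + (-8)*x^6 + (-4)*x^7 + (-5)*x^8 + (-6)*x^9 + (-3)*x^10 + (-1)*x^11 + (-1)*x^12 + (-1)*x^13)*h3)
      · rw [h81] at hyr; exact one_ne_zero (α := GaloisField 3 m) (by
          linear_combination (1 + 2*x + 2*x^2 + x^3 + 2*x^6)*hs2 + (1 + 2*x + x^3 + 2*x^4)*rel1 - (1 + 4*x + 5*x^2 + 4*x^3 + 8*x^4 + 9*x^5 + 3*x^6 + 4*x^7 + 4*x^8)*hyr + ((-2)*x + (-4)*x^2 + (-5)*x^3 + (-8)*x^4 + (-10)*x^5 + (-10)*x^6 + (-13)*x^7 + (-12)*x^8 + (-8)*x^9 + (-5)*x^10 + (-4)*x^11 + (-2)*x^12)*h3)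
    -- sextic s3
    · exfalso
      have h9 : x ^ 9 = (1 + x + 2*x^3 + 2*x^4) := by
        linear_combination (2 + x + x^2 + x^3)*hs3 + ((-1) + (-2)*x + (-1)*x^2 + (-3)*x^3 + (-2)*x^4 + (-2)*x^5 + (-2)*x^6 + (-1)*x^7 + (-1)*x^8)*h3
      have h81 : x ^ 81 = (2 + x + 2*x^2 + 2*x^5) := by
        rw [show (81:ℕ) = 9*9 from by norm_num, pow_mul, h9]
        linear_combination (2 + x + 2*x^2 + x^3 + 2*x^4 + x^5 + x^6 + x^7 + x^8 + x^9 + x^10 + 2*x^11 + x^13 + 2*x^16 + x^18 + 2*x^19 + 2*x^20 + 2*x^21 + 2*x^22 + 2*x^23 + 2*x^24 + x^25 + x^27 + 2*x^28 + 2*x^29 + 2*x^30)*hs3 + ((-1) + x + 10*x^2 + 31*x^3 + 94*x^4 + 253*x^5 + 577*x^6 + 1196*x^7 + 2484*x^8 + 4757*x^9 + 8277*x^10 + 14163*x^11 + 23523*x^12 + 35998*x^13 + 52845*x^14 + 76655*x^15 + 104829*x^16 + 135070*x^17 + 171359*x^18 + 209661*x^19 + 239902*x^20 + 265628*x^21 +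 287996*x^22 + 293180*x^23 + 281659*x^24 + 264955*x^25 + 237308*x^26 + 195495*x^27 + 153596*x^28 + 116732*x^29 + 80380*x^30 + 49149*x^31 + 28414*x^32 + 15101*x^33 + 6142*x^34 + 1534*x^35 + 170*x^36)*h3
      have h729 : x ^ 729 = x := by
        rw [show (729:ℕ) = 81*9 from by norm_num, pow_mul, h81]
        linear_combination (2 + x + x^2 + x^4 + x^5 + x^7 + x^8 + x^10 + x^11 + 2*x^12 + x^17 + x^18 + x^19 + 2*x^20 + 2*x^22 + x^23 + x^24 + x^25 + 2*x^31 + 2*x^32 + 2*x^33 + x^34 + x^36 + 2*x^37 + 2*x^38 + 2*x^39)*hs3 + (170 + 766*x + 3071*x^2 + 7934*x^3 + 18239*x^4 + 34461*x^5 + 59678*x^6 + 95662*x^7 + 143140*x^8 + 207967*x^9 + 280996*x^10 + 368974*x^11 + 459518*x^12 + 553059*x^13 + 652703*x^14 + 731230*x^15 + 810143*x^16 + 854254*x^17 + 883401*x^18 + 900671*x^19 + 871678*x^20 + 847582*x^21 + 776830*x^22 + 706940*x^23 + 640062*x^24 + 538268*x^25 + 469054*x^26 + 374526*x^27 + 301054*x^28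 + 248639*x^29 + 175615*x^30 + 139775*x^31 + 96766*x^32 + 66302*x^33 + 53757*x^34 + 27646*x^35 + 20477*x^36 + 13820*x^37 + 6140*x^38 + 6140*x^39 + 1533*x^40 + 766*x^41 + 1533*x^42 + (-2)*x^43 + (-2)*x^44 + 170*x^45)*h3
      have hbase : ∀ k : ℕ, x ^ (729:ℕ) ^ k = x := by
        intro k
        induction k with
        | zero => simp
        | succ n ih => rw [pow_succ, pow_mul, ih]; exact h729
      have hyr : y = x ^ (3:ℕ) ^ (m / 2 % 6) := by
        conv_lhs => rw [hy, show m / 2 = 6 * (m / 2 / 6) + m / 2 % 6 from by omega]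
        rw [pow_add, show (3:ℕ) ^ (6 * (m / 2 / 6)) = 729 ^ (m / 2 / 6) from by
          rw [pow_mul]; norm_num, pow_mul, hbase]
      have hr : m / 2 % 6 = 0 ∨ m / 2 % 6 = 2 ∨ m / 2 % 6 = 4 := by omega
      rcases hr with hr | hr | hr <;> rw [hr] at hyr <;> norm_num at hyr
      · exact one_ne_zero (α := GaloisField 3 m) (by
          linear_combination (1 + x + x^2)*hs3 + (1 + 2*x + x^2 + x^5)*rel1 - (1 + 4*x + 6*x^2 + 5*x^3 + 5*x^4 + 6*x^5 + 4*x^6 + x^7 + x^8 + 2*x^9)*hyr + ((-2)*x + (-4)*x^2 + (-5)*x^3 + (-4)*x^4 + (-5)*x^5 + (-5)*x^6 + (-3)*x^7 + (-1)*x^8 + (-1)*x^9 + (-1)*x^10)*h3)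
      · rw [h9] at hyr; exact one_ne_zero (α := GaloisField 3 m) (by
          linear_combination (2 + 2*x + 2*x^2 + x^3 + 2*x^4 + x^5 + x^6)*hs3 + (2 + 2*x + 2*x^4)*rel1 - (2 + 6*x + 6*x^2 + 4*x^3 + 8*x^4 + 8*x^5 + 2*x^6 + 2*x^7 + 4*x^8)*hyr + ((-1) + (-6)*x + (-8)*x^2 + (-9)*x^3 + (-14)*x^4 + (-21)*x^5 + (-15)*x^6 + (-14)*x^7 + (-16)*x^8 + (-11)*x^9 + (-4)*x^10 + (-5)*x^11 + (-3)*x^12)*h3)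
      · rw [h81] at hyr; exact one_ne_zero (α := GaloisField 3 m) (by
          linear_combination (2 + x + x^2 + x^4 + 2*x^5 + 2*x^6 + 2*x^7 + x^8)*hs3 + (1 + x^2 + x^4 + 2*x^5)*rel1 - (1 + 2*x + 2*x^2 + 3*x^3 + 4*x^4 + 5*x^5 + 7*x^6 + 3*x^7 + 4*x^8 + 4*x^9)*hyr + ((-1) + (-4)*x + (-4)*x^2 + (-7)*x^3 + (-7)*x^4 + (-12)*x^5 + (-16)*x^6 + (-14)*x^7 + (-15)*x^8 + (-13)*x^9 + (-11)*x^10 + (-10)*x^11 + (-4)*x^12 + (-4)*x^13 + (-3)*x^14)*h3)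
  · rintro rfl
    rw [zero_add, one_pow, zero_pow (by positivity), sub_zero, sub_self]
end

section
/- Let m be a positive integer with m ≡ 2 (mod 4) and m ≥ 6, let h = (m+2)/2 and e = 3^h + 5. Then the only element x of the finite field GF(3^m) satisfying (x+1)^e - x^e - 1 = 0 is x = 0. -/
private lemma pow_pow_iter {K : Type*} [Monoid K] {x : K} {d : ℕ}
    (hd : x ^ 3 ^ d = x) (k : ℕ) : x ^ 3 ^ (d * k) = x := by
  induction k with
  | zero => simp
  | succ n ih => rw [Nat.mul_succ, pow_add, pow_mul, ih, hd]

private lemma pow_mod_reduce {K : Type*} [Monoid K] {x : K} {d n : ℕ}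
    (hd : x ^ 3 ^ d = x) (hn : x ^ 3 ^ n = x) : x ^ 3 ^ (n % d) = x := by
  have h1 : x ^ 3 ^ (d * (n / d) + n % d) = x := by rw [Nat.div_add_mod]; exact hn
  rw [pow_add, pow_mul x (3 ^ (d * (n / d))) (3 ^ (n % d)), pow_pow_iter hd] at h1
  exact h1

set_option maxHeartbeats 3200000 in
theorem stmt_5 (m : ℕ) (hm : 0 < m) (hmod : m % 4 = 2) (hge : 6 ≤ m)
    (h e : ℕ) (hh : h = (m + 2) / 2) (he : e = 3 ^ h + 5)
    (x : GaloisField 3 m) :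
    (x + 1) ^ e - x ^ e - 1 = 0 ↔ x = 0 := by
  have h3 : (3  : GaloisField 3 m) = 0 := by
    have := CharP.cast_eq_zero (GaloisField 3 m) 3
    exact_mod_cast this
  constructor
  · intro heq
    letI : Fintype (GaloisField 3 m) := Fintype.ofFinite _
    have hcard : x ^ 3 ^ m = x := by
      have h1 := FiniteField.pow_card x
      rwa [← Nat.card_eq_fintype_card, GaloisField.card 3 m (by omega)] at h1
    obtain ⟨y, hy⟩ : ∃ y : GaloisField 3 m, y = x ^ 3 ^ h := ⟨_, rfl⟩
    have h3h : ∀ z : GaloisField 3 m, (z + 1) ^ 3 ^ h = z ^ 3 ^ h + 1 := by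
      intro z
      rw [add_pow_char_pow, one_pow]
    have hyy : y ^ 3 ^ h = x ^ 9 := by
      rw [hy, ← pow_mul, ← pow_add]
      have hm2 : h + h = m + 2 := by omega
      rw [hm2, pow_add, pow_mul, hcard]
      norm_num
    have heq1 : (y + 1) * (x + 1) ^ 5 - y * x ^ 5 - 1 = 0 := by
      have e1 : (x + 1) ^ e = (y + 1) * (x + 1) ^ 5 := by
        rw [he, pow_add, h3h, hy]
      have e2 : x ^ e = y * x ^ 5 := by rw [he, pow_add, hy]
      rw [e1, e2] at heq
      exact heq
    have heq2 : (x ^ 9 + 1) * (y + 1) ^ 5 - x ^ 9 * y ^ 5 - 1 = 0 := by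
      have heqF : ((x + 1) ^ e) ^ 3 ^ h - (x ^ e) ^ 3 ^ h - 1 = 0 := by
        have h0 : ((x + 1) ^ e - x ^ e - 1) ^ 3 ^ h = 0 := by
          rw [heq]
          exact zero_pow (by positivity)
        rwa [sub_pow_char_pow, sub_pow_char_pow, one_pow] at h0
      have e3 : ((x + 1) ^ e) ^ 3 ^ h = (x ^ 9 + 1) * (y + 1) ^ 5 := by
        rw [← pow_mul, Nat.mul_comm, pow_mul, h3h, ← hy, he, pow_add, h3h, hyy]
      have e4 : (x ^ e) ^ 3 ^ h = x ^ 9 * y ^ 5 := by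
        rw [← pow_mul, Nat.mul_comm, pow_mul, ← hy, he, pow_add, hyy]
      rw [e3, e4] at heqF
      exact heqF
    have hfact : x * (x - 1) * (x + 1) * (x ^ 4 + x ^ 3 + x ^ 2 + -1 * x + (-1 : GaloisField 3 m)) * (x ^ 4 + x ^ 3 + -1 * x ^ 2 + -1 * x + (-1 : GaloisField 3 m)) * (x ^ 6 + -1 * x ^ 5 + x ^ 4 + -1 * x ^ 3 + x ^ 2 + -1 * x + (1 : GaloisField 3 m)) * (x ^ 8 + x ^ 7 + x ^ 6 + -1 * x ^ 4 + x ^ 2 + x + (1 : GaloisField 3 m)) * (x ^ 8 + x ^ 7 + -1 * x ^ 6 + -1 * x ^ 2 + x + (1 : GaloisField 3 m)) = 0 := by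
      linear_combination (x ^ 28 + x ^ 27 * y + x ^ 27 + x ^ 26 * y ^ 2 + x ^ 26 * y + (-1) * x ^ 26 + x ^ 25 * y ^ 3 + x ^ 25 * y ^ 2 + (-1) * x ^ 25 + (-1) * x ^ 24 * y ^ 3 + (-1) * x ^ 24 * y ^ 2 + x ^ 24 + (-1) * x ^ 23 * y ^ 3 + x ^ 23 * y ^ 2 + (-1) * x ^ 23 * y + (-1) * x ^ 23 + x ^ 22 * y + (-1) * x ^ 22 + (-1) * x ^ 21 * y ^ 2 + x ^ 21 * y + x ^ 21 + x ^ 20 * y ^ 3 + x ^ 20 * y + x ^ 20 + x ^ 19 * y ^ 3 + x ^ 19 * y ^ 2 + (-1) * x ^ 19 * y + (-1) * x ^ 18 * y ^ 3 + (-1) * x ^ 18 * y ^ 2 + x ^ 18 * y + x ^ 18 + x ^ 17 * y ^ 2 + x ^ 17 * y + (-1) * x ^ 17 + (-1) * x ^ 16 * y ^ 4 + (-1) * x ^ 16 * y ^ 3 + x ^ 16 * y ^ 2 + x ^ 16 * y + x ^ 16 + x ^ 15 * y ^ 4 + x ^ 15 * y ^ 3 + x ^ 14 * y ^ 4 + x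 ^ 14 * y ^ 3 + x ^ 14 * y ^ 2 + (-1) * x ^ 14 * y + (-1) * x ^ 14 + (-1) * x ^ 13 * y ^ 2 + x ^ 13 * y + x ^ 13 + x ^ 12 * y ^ 3 + x ^ 12 * y ^ 2 + x ^ 12 * y + (-1) * x ^ 11 * y ^ 4 + x ^ 11 * y ^ 3 + x ^ 11 * y ^ 2 + x ^ 11 + (-1) * x ^ 10 * y ^ 4 + x ^ 10 * y ^ 3 + x ^ 10 * y + x ^ 10 + x ^ 9 * y ^ 4 + x ^ 9 * y ^ 3 + (-1) * x ^ 9 * y ^ 2 + x ^ 9 + (-1) * x ^ 8 * y ^ 4 + x ^ 8 * y ^ 3 + (-1) * x ^ 8 * y ^ 2 + (-1) * x ^ 7 * y ^ 2 + x ^ 7 * y + (-1) * x ^ 7 + (-1) * x ^ 6 * y ^ 3 + (-1) * x ^ 6 + x ^ 5 * y ^ 4 + (-1) * x ^ 5 * y ^ 3 + x ^ 5 * y ^ 2 + x ^ 5 + x ^ 4 * y + x ^ 4 + x ^ 3 * y ^ 3 + (-1) * x ^ 3 * y + (-1) * x ^ 2 * y ^ 4 + (-1) * x ^ 2 * y ^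 3 + x ^ 2 * y + x ^ 2 + x * y ^ 4 + x * y ^ 3 + (-1) * x * y ^ 2 + x + (-1) * y ^ 4 + y ^ 3 + (-1) * y ^ 2 + (-1) * y + (1 : GaloisField 3 m)) * heq1 + ((-1) * x ^ 20 + (-1) * x ^ 19 + x ^ 18 + x ^ 16 + (-1) * x ^ 15 + (-1) * x ^ 14 + x ^ 12 + (-1) * x ^ 9 + (-1) * x ^ 7 + x ^ 5 + (-1) * x ^ 4 + (-1) * x ^ 3 + x + (1 : GaloisField 3 m)) * heq2 + (-2 * x ^ 32 * y + (-1) * x ^ 32 + -2 * x ^ 31 * y ^ 2 + -7 * x ^ 31 * y + -4 * x ^ 31 + -2 * x ^ 30 * y ^ 3 + -7 * x ^ 30 * y ^ 2 + -10 * x ^ 30 * y + -6 * x ^ 30 + -3 * x ^ 29 * y ^ 3 + -8 * x ^ 29 * y ^ 2 + -5 * x ^ 29 * y + -4 * x ^ 29 + -3 * x ^ 28 * y ^ 3 + -7 * x ^ 28 * y ^ 2 + x ^ 28 + -5 * x ^ 27 * y ^ 3 + -7 * x ^ 27 * y ^ 2 + x ^ 27 * y + 6 * x ^ 27 + 5 *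 x ^ 26 * y ^ 4 + 3 * x ^ 26 * y ^ 3 + 5 * x ^ 26 * y + 10 * x ^ 26 + 3 * x ^ 25 * y ^ 4 + x ^ 25 * y ^ 3 + -5 * x ^ 25 * y ^ 2 + 9 * x ^ 25 + 2 * x ^ 24 * y ^ 4 + 5 * x ^ 24 * y ^ 3 + -2 * x ^ 24 * y ^ 2 + -5 * x ^ 24 * y + (-1) * x ^ 24 + -3 * x ^ 23 * y ^ 4 + (-1) * x ^ 23 * y ^ 2 + -10 * x ^ 23 * y + -13 * x ^ 23 + -5 * x ^ 22 * y ^ 4 + -5 * x ^ 22 * y ^ 3 + -4 * x ^ 22 * y ^ 2 + -10 * x ^ 22 * y + -16 * x ^ 22 + -3 * x ^ 21 * y ^ 4 + -6 * x ^ 21 * y ^ 3 + -9 * x ^ 21 * y ^ 2 + -9 * x ^ 21 * y + -9 * x ^ 21 + 2 * x ^ 20 * y ^ 5 + 6 * x ^ 20 * y ^ 4 + 3 * x ^ 20 * y ^ 3 + -7 * x ^ 20 * y ^ 2 + -7 * x ^ 20 * y + 3 * x ^ 20 + 2 * x ^ 19 * y ^ 5 + 6 * x ^ 19 * y ^ 4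 + x ^ 19 * y ^ 3 + -10 * x ^ 19 * y ^ 2 + -8 * x ^ 19 * y + 11 * x ^ 19 + -2 * x ^ 18 * y ^ 5 + -3 * x ^ 18 * y ^ 4 + -8 * x ^ 18 * y ^ 3 + -10 * x ^ 18 * y ^ 2 + -4 * x ^ 18 * y + 12 * x ^ 18 + -5 * x ^ 17 * y ^ 5 + -10 * x ^ 17 * y ^ 4 + -9 * x ^ 17 * y ^ 3 + -4 * x ^ 17 * y ^ 2 + -5 * x ^ 16 * y ^ 5 + -11 * x ^ 16 * y ^ 4 + -9 * x ^ 16 * y ^ 3 + -4 * x ^ 16 * y ^ 2 + -2 * x ^ 16 * y + -12 * x ^ 16 + -5 * x ^ 15 * y ^ 4 + -7 * x ^ 15 * y ^ 3 + -5 * x ^ 15 * y ^ 2 + -7 * x ^ 15 * y + -16 * x ^ 15 + 5 * x ^ 14 * y ^ 5 + -4 * x ^ 14 * y ^ 4 + -14 * x ^ 14 * y ^ 3 + -11 * x ^ 14 * y ^ 2 + -13 * x ^ 14 * y + -12 * x ^ 14 + 5 * x ^ 13 * y ^ 5 + -3 * x ^ 13 * y ^ 4 + -10 * x ^ 13 *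 y ^ 3 + -5 * x ^ 13 * y ^ 2 + -12 * x ^ 13 * y + -3 * x ^ 13 + 3 * x ^ 12 * y ^ 5 + -7 * x ^ 12 * y ^ 4 + -7 * x ^ 12 * y ^ 3 + -12 * x ^ 12 * y + 2 * x ^ 12 + 2 * x ^ 11 * y ^ 5 + -7 * x ^ 11 * y ^ 4 + 5 * x ^ 11 * y ^ 2 + -7 * x ^ 11 * y + 5 * x ^ 11 + 2 * x ^ 10 * y ^ 5 + -4 * x ^ 10 * y ^ 4 + 2 * x ^ 10 * y ^ 3 + x ^ 10 * y ^ 2 + -2 * x ^ 10 * y + 4 * x ^ 10 + 3 * x ^ 9 * y ^ 4 + 7 * x ^ 9 * y ^ 3 + x ^ 9 * y + -2 * x ^ 9 + -3 * x ^ 8 * y ^ 5 + 3 * x ^ 8 * y ^ 4 + 5 * x ^ 8 * y ^ 3 + -5 * x ^ 8 * y ^ 2 + -3 * x ^ 8 * y + -7 * x ^ 8 + -3 * x ^ 7 * y ^ 5 + 2 * x ^ 7 * y ^ 4 + 4 * x ^ 7 * y ^ 3 + -2 * x ^ 7 * y ^ 2 + -5 * x ^ 7 * y + -8 * x ^ 7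 + -2 * x ^ 6 * y ^ 3 + -3 * x ^ 6 * y ^ 2 + -8 * x ^ 6 * y + -4 * x ^ 6 + x ^ 5 * y ^ 5 + (-1) * x ^ 5 * y ^ 4 + -4 * x ^ 5 * y ^ 3 + -3 * x ^ 5 * y ^ 2 + -10 * x ^ 5 * y + -3 * x ^ 5 + 2 * x ^ 4 * y ^ 5 + 5 * x ^ 4 * y ^ 3 + 8 * x ^ 4 * y ^ 2 + -7 * x ^ 4 * y + -7 * x ^ 4 + 2 * x ^ 3 * y ^ 5 + -2 * x ^ 3 * y ^ 4 + 5 * x ^ 3 * y ^ 3 + 12 * x ^ 3 * y ^ 2 + -5 * x ^ 3 * y + -9 * x ^ 3 + 2 * x ^ 2 * y ^ 5 + -3 * x ^ 2 * y ^ 4 + 8 * x ^ 2 * y ^ 2 + -2 * x ^ 2 * y + -6 * x ^ 2 + x * y ^ 5 + -2 * x * y ^ 4 + -3 * x * y ^ 3 + -2 * x * y + -2 * x + -2 * y ^ 4 + -3 * y ^ 3 + -3 * y ^ 2 + -2 * y) * h3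
    rcases mul_eq_zero.mp hfact with hrest | ho2
    rcases mul_eq_zero.mp hrest with hrest | ho1
    rcases mul_eq_zero.mp hrest with hrest | hs6
    rcases mul_eq_zero.mp hrest with hrest | hq2
    rcases mul_eq_zero.mp hrest with hrest | hq1
    rcases mul_eq_zero.mp hrest with hrest | hxp1
    rcases mul_eq_zero.mp hrest with hx0 | hxm1
    · exact hx0
    · -- x = 1
      exfalso
      have hx1 : x = 1 := by linear_combination hxm1
      subst hx1
      rw [one_pow] at hy
      subst hy
      exact absurd (by linear_combination (-1  : GaloisField 3 m) * heq1 + 21 * h3 : (1 : GaloisField 3 m) = 0) one_ne_zero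
    · -- x = -1
      exfalso
      have hx1 : x = -1 := by linear_combination hxp1
      subst hx1
      have hodd : Odd (3 ^ h) := Odd.pow ⟨1, rfl⟩
      rw [hodd.neg_one_pow] at hy
      subst hy
      exact absurd (by linear_combination heq1 + h3 : (1 : GaloisField 3 m) = 0) one_ne_zero
    · -- quartic 1
      exfalso
      have h_q1_0 : x ^ 1 = x := pow_one x
      have h_q1_1 : x ^ 3 = (x ^ 3) := by
        linear_combination ((x ^ 2  : GaloisField 3 m) + x * (x) + (x) ^ 2) * h_q1_0 + 0 * hq1 + 0 * h3
      have h_q1_2 : x ^ 9 = (-1 * x ^ 3 + x ^ 2 + (-1 : GaloisField 3 m)) := by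
        linear_combination ((x ^ 6  : GaloisField 3 m) + x ^ 3 * (x ^ 3) + (x ^ 3) ^ 2) * h_q1_1 + (x ^ 5 + -1 * x ^ 4 + -1 * x ^ 2 + x + (-1 : GaloisField 3 m)) * hq1 + (x ^ 6) * h3
      have h_q1_3 : x ^ 27 = (-1 * x ^ 2 + -1 * x) := by
        linear_combination ((x ^ 18  : GaloisField 3 m) + x ^ 9 * (-1 * x ^ 3 + x ^ 2 + (-1 : GaloisField 3 m)) + (-1 * x ^ 3 + x ^ 2 + (-1 : GaloisField 3 m)) ^ 2) * h_q1_2 + (-1 * x ^ 5 + x ^ 4 + -1 * x ^ 2 + x + (1 : GaloisField 3 m)) * hq1 + (x ^ 8 + -1 * x ^ 7 + -1 * x ^ 6 + 2 * x ^ 5 + -1 * x ^ 4 + -2 * x ^ 3 + x ^ 2 + x) * h3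
      have h_q1_4 : x ^ 81 = (x) := by
        linear_combination ((x ^ 54  : GaloisField 3 m) + x ^ 27 * (-1 * x ^ 2 + -1 * x) + (-1 * x ^ 2 + -1 * x) ^ 2) * h_q1_3 + (-1 * x ^ 2 + x) * hq1 + (-1 * x ^ 5 + -1 * x ^ 4 + -1 * x ^ 3) * h3
      have hpd : x ^ 3 ^ 4 = x := by norm_num; exact h_q1_4
      have hx9 : x ^ 9 = x := by
        have := pow_mod_reduce hpd hcard
        rw [hmod] at this; norm_num at this; exact this
      exact absurd (by linear_combination (-1 * x ^ 7 + x ^ 6 + -1 * x ^ 5 + -1 * x ^ 4 + -1 * x ^ 3 + -1 * x ^ 2 + (-1 : GaloisField 3 m)) * hq1 + (x ^ 2 + (1 : GaloisField 3 m)) * hx9 + (x ^ 7 + x ^ 6) * h3 : (1 : GaloisField 3 m) = 0) one_ne_zero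
    · -- quartic 2
      exfalso
      have h_q2_0 : x ^ 1 = x := pow_one x
      have h_q2_1 : x ^ 3 = (x ^ 3) := by
        linear_combination ((x ^ 2  : GaloisField 3 m) + x * (x) + (x) ^ 2) * h_q2_0 + 0 * hq2 + 0 * h3
      have h_q2_2 : x ^ 9 = (-1 * x + (1 : GaloisField 3 m)) := by
        linear_combination ((x ^ 6  : GaloisField 3 m) + x ^ 3 * (x ^ 3) + (x ^ 3) ^ 2) * h_q2_1 + (x ^ 5 + -1 * x ^ 4 + -1 * x ^ 3 + x ^ 2 + x + (1 : GaloisField 3 m)) * hq2 + (x ^ 7 + -1 * x ^ 5 + -1 * x ^ 4 + x ^ 2 + x) * h3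
      have h_q2_3 : x ^ 27 = (-1 * x ^ 3 + (1 : GaloisField 3 m)) := by
        linear_combination ((x ^ 18  : GaloisField 3 m) + x ^ 9 * (-1 * x + (1 : GaloisField 3 m)) + (-1 * x + (1 : GaloisField 3 m)) ^ 2) * h_q2_2 + 0 * hq2 + (x ^ 2 + -1 * x) * h3
      have h_q2_4 : x ^ 81 = (x) := by
        linear_combination ((x ^ 54  : GaloisField 3 m) + x ^ 27 * (-1 * x ^ 3 + (1 : GaloisField 3 m)) + (-1 * x ^ 3 + (1 : GaloisField 3 m)) ^ 2) * h_q2_3 + (-1 * x ^ 5 + x ^ 4 + x ^ 3 + -1 * x ^ 2 + -1 * x + (-1 : GaloisField 3 m)) * hq2 + (-1 * x ^ 7 + x ^ 6 + x ^ 5 + x ^ 4 + -1 * x ^ 3 + -1 * x ^ 2 + -1 * x) * h3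
      have hpd : x ^ 3 ^ 4 = x := by norm_num; exact h_q2_4
      have hx9 : x ^ 9 = x := by
        have := pow_mod_reduce hpd hcard
        rw [hmod] at this; norm_num at this; exact this
      exact absurd (by linear_combination (-1 * x ^ 8 + x ^ 7 + -1 * x ^ 6 + x ^ 5 + x ^ 4 + x ^ 2 + x + (-1 : GaloisField 3 m)) * hq2 + (x ^ 3 + -1 * x) * hx9 + (-1 * x ^ 8 + x ^ 4 + x ^ 3) * h3 : (1 : GaloisField 3 m) = 0) one_ne_zero
    · -- sextic
      exfalso
      have h_s6_0 : x ^ 1 = x := pow_one x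
      have h_s6_1 : x ^ 3 = (x ^ 3) := by
        linear_combination ((x ^ 2  : GaloisField 3 m) + x * (x) + (x) ^ 2) * h_s6_0 + 0 * hs6 + 0 * h3
      have h_s6_2 : x ^ 9 = (-1 * x ^ 2) := by
        linear_combination ((x ^ 6  : GaloisField 3 m) + x ^ 3 * (x ^ 3) + (x ^ 3) ^ 2) * h_s6_1 + (x ^ 3 + x ^ 2) * hs6 + 0 * h3
      have h_s6_3 : x ^ 27 = (-1 * x ^ 5 + x ^ 4 + -1 * x ^ 3 + x ^ 2 + -1 * x + (1 : GaloisField 3 m)) := by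
        linear_combination ((x ^ 18  : GaloisField 3 m) + x ^ 9 * (-1 * x ^ 2) + (-1 * x ^ 2) ^ 2) * h_s6_2 + ((-1 : GaloisField 3 m)) * hs6 + 0 * h3
      have h_s6_4 : x ^ 81 = (-1 * x ^ 4) := by
        linear_combination ((x ^ 54  : GaloisField 3 m) + x ^ 27 * (-1 * x ^ 5 + x ^ 4 + -1 * x ^ 3 + x ^ 2 + -1 * x + (1 : GaloisField 3 m)) + (-1 * x ^ 5 + x ^ 4 + -1 * x ^ 3 + x ^ 2 + -1 * x + (1 : GaloisField 3 m)) ^ 2) * h_s6_3 + (-1 * x ^ 9 + -1 * x ^ 8 + x ^ 6 + x ^ 5 + -1 * x ^ 3 + x + (1 : GaloisField 3 m)) * hs6 + (x ^ 14 + -2 * x ^ 13 + 3 * x ^ 12 + -5 * x ^ 11 + 7 * x ^ 10 + -8 * x ^ 9 + 9 * x ^ 8 + -9 * x ^ 7 + 8 * x ^ 6 + -7 * x ^ 5 + 5 * x ^ 4 + -3 * x ^ 3 + 2 * x ^ 2 + -1 * x) * h3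
      have h_s6_5 : x ^ 243 = (x ^ 5) := by
        linear_combination ((x ^ 162  : GaloisField 3 m) + x ^ 81 * (-1 * x ^ 4) + (-1 * x ^ 4) ^ 2) * h_s6_4 + (-1 * x ^ 6 + -1 * x ^ 5) * hs6 + 0 * h3
      have h_s6_6 : x ^ 729 = (x) := by
        linear_combination ((x ^ 486  : GaloisField 3 m) + x ^ 243 * (x ^ 5) + (x ^ 5) ^ 2) * h_s6_5 + (x ^ 9 + x ^ 8 + -1 * x ^ 2 + -1 * x) * hs6 + 0 * h3
      have hpd : x ^ 3 ^ 6 = x := by norm_num; exact h_s6_6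
      by_cases h3m : m % 3 = 0
      · -- 6 ∣ m, so h ≡ 4 [MOD 6] and y = x ^ 81
        have hh6 : h % 6 = 4 := by omega
        have hy81 : y = x ^ 81 := by
          rw [hy]
          have hsplit : h = 6 * (h / 6) + 4 := by omega
          rw [hsplit, pow_add, pow_mul x (3 ^ (6 * (h / 6))) (3 ^ 4), pow_pow_iter hpd]
          norm_num
        rw [hy81] at heq1
        exact absurd (by linear_combination (x ^ 82 + -1 * x ^ 81 + x ^ 80 + -1 * x ^ 79 + -1 * x ^ 77 + x ^ 76 + -1 * x ^ 75 + x ^ 74 + -1 * x ^ 73 + x ^ 72 + x ^ 70 + -1 * x ^ 69 + x ^ 68 + -1 * x ^ 67 + x ^ 66 + -1 * x ^ 65 + -1 * x ^ 63 + x ^ 62 + -1 * x ^ 61 + x ^ 60 + -1 * x ^ 59 + x ^ 58 + x ^ 56 + -1 * x ^ 55 + x ^ 54 + -1 * x ^ 53 + x ^ 52 + -1 * x ^ 51 + -1 * x ^ 49 + x ^ 48 + -1 * x ^ 47 + x ^ 46 + -1 * x ^ 45 + x ^ 44 + x ^ 42 + -1 * x ^ 41 + x ^ 40 + -1 * x ^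 39 + x ^ 38 + -1 * x ^ 37 + -1 * x ^ 35 + x ^ 34 + -1 * x ^ 33 + x ^ 32 + -1 * x ^ 31 + x ^ 30 + x ^ 28 + -1 * x ^ 27 + x ^ 26 + -1 * x ^ 25 + x ^ 24 + -1 * x ^ 23 + -1 * x ^ 21 + x ^ 20 + -1 * x ^ 19 + x ^ 18 + -1 * x ^ 17 + x ^ 16 + x ^ 14 + -1 * x ^ 13 + x ^ 12 + -1 * x ^ 11 + x ^ 10 + -1 * x ^ 9 + -1 * x ^ 7 + x ^ 6 + -1 * x ^ 5 + x ^ 4 + -1 * x ^ 3 + x + (1 : GaloisField 3 m)) * hs6 + (x ^ 3 + -1 * x ^ 2) * heq1 + (-2 * x ^ 88 + -1 * x ^ 87 + -1 * x ^ 86 + 3 * x ^ 85 + 2 * x ^ 83 + -2 * x ^ 82 + 2 * x ^ 81 + -2 * x ^ 80 + 2 * x ^ 79 + -2 * x ^ 78 + 2 * x ^ 77 + -2 * x ^ 76 + 2 * x ^ 75 + -2 * x ^ 74 + 2 * x ^ 73 + -2 * x ^ 72 + 2 * x ^ 71 + -2 * x ^ 70 + 2 * x ^ 69 + -2 * x ^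 68 + 2 * x ^ 67 + -2 * x ^ 66 + 2 * x ^ 65 + -2 * x ^ 64 + 2 * x ^ 63 + -2 * x ^ 62 + 2 * x ^ 61 + -2 * x ^ 60 + 2 * x ^ 59 + -2 * x ^ 58 + 2 * x ^ 57 + -2 * x ^ 56 + 2 * x ^ 55 + -2 * x ^ 54 + 2 * x ^ 53 + -2 * x ^ 52 + 2 * x ^ 51 + -2 * x ^ 50 + 2 * x ^ 49 + -2 * x ^ 48 + 2 * x ^ 47 + -2 * x ^ 46 + 2 * x ^ 45 + -2 * x ^ 44 + 2 * x ^ 43 + -2 * x ^ 42 + 2 * x ^ 41 + -2 * x ^ 40 + 2 * x ^ 39 + -2 * x ^ 38 + 2 * x ^ 37 + -2 * x ^ 36 + 2 * x ^ 35 + -2 * x ^ 34 + 2 * x ^ 33 + -2 * x ^ 32 + 2 * x ^ 31 + -2 * x ^ 30 + 2 * x ^ 29 + -2 * x ^ 28 + 2 * x ^ 27 + -2 * x ^ 26 + 2 * x ^ 25 + -2 * x ^ 24 + 2 * x ^ 23 + -2 * x ^ 22 + 2 * x ^ 21 + -2 * x ^ 20 + 2 * x ^ 19 + -2 * x ^ 18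 + 2 * x ^ 17 + -2 * x ^ 16 + 2 * x ^ 15 + -2 * x ^ 14 + 2 * x ^ 13 + -2 * x ^ 12 + 2 * x ^ 11 + -2 * x ^ 10 + 2 * x ^ 9 + -2 * x ^ 8 + -3 * x ^ 6 + x ^ 5 + x ^ 4 + 2 * x ^ 3) * h3 : (1 : GaloisField 3 m) = 0) one_ne_zero
      · have hm6 : m % 6 = 2 ∨ m % 6 = 4 := by omega
        have hx9 : x ^ 9 = x := by
          rcases hm6 with hm6 | hm6
          · have := pow_mod_reduce hpd hcard
            rw [hm6] at this; norm_num at this; exact this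
          · have h4 : x ^ 3 ^ 4 = x := by
              have := pow_mod_reduce hpd hcard
              rw [hm6] at this; exact this
            have := pow_mod_reduce h4 hpd
            norm_num at this; exact this
        exact absurd (by linear_combination (-1 * x ^ 7 + x ^ 6 + -1 * x ^ 5 + x ^ 4 + -1 * x ^ 3 + x ^ 2 + (1 : GaloisField 3 m)) * hs6 + (x ^ 4 + x ^ 3 + -1 * x + (-1 : GaloisField 3 m)) * hx9 + (-1 * x ^ 12 + x ^ 11 + -1 * x ^ 10 + 2 * x ^ 9 + -2 * x ^ 8 + 2 * x ^ 7 + -2 * x ^ 6 + 2 * x ^ 5 + -1 * x ^ 4 + x ^ 3 + -1 * x ^ 2) * h3 : (1 : GaloisField 3 m) = 0) one_ne_zero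
    · -- octic 1
      exfalso
      have h_o1_0 : x ^ 1 = x := pow_one x
      have h_o1_1 : x ^ 3 = (x ^ 3) := by
        linear_combination ((x ^ 2  : GaloisField 3 m) + x * (x) + (x) ^ 2) * h_o1_0 + 0 * ho1 + 0 * h3
      have h_o1_2 : x ^ 9 = (x ^ 6 + x ^ 5 + -1 * x ^ 4 + -1 * x ^ 3 + (1 : GaloisField 3 m)) := by
        linear_combination ((x ^ 6  : GaloisField 3 m) + x ^ 3 * (x ^ 3) + (x ^ 3) ^ 2) * h_o1_1 + (x + (-1 : GaloisField 3 m)) * ho1 + 0 * h3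
      have h_o1_3 : x ^ 27 = (-1 * x ^ 7 + -1 * x ^ 6 + -1 * x ^ 5 + -1 * x ^ 4 + x ^ 3 + x) := by
        linear_combination ((x ^ 18  : GaloisField 3 m) + x ^ 9 * (x ^ 6 + x ^ 5 + -1 * x ^ 4 + -1 * x ^ 3 + (1 : GaloisField 3 m)) + (x ^ 6 + x ^ 5 + -1 * x ^ 4 + -1 * x ^ 3 + (1 : GaloisField 3 m)) ^ 2) * h_o1_2 + (x ^ 10 + -1 * x ^ 9 + -1 * x ^ 7 + -1 * x ^ 6 + x ^ 5 + x ^ 4 + x ^ 2 + x + (1 : GaloisField 3 m)) * ho1 + (x ^ 17 + -2 * x ^ 15 + -1 * x ^ 14 + 2 * x ^ 13 + 3 * x ^ 12 + x ^ 11 + -3 * x ^ 10 + -4 * x ^ 9 + -1 * x ^ 8 + 2 * x ^ 7 + 2 * x ^ 6 + x ^ 5 + -1 * x ^ 4 + -2 * x ^ 3 + -1 * x ^ 2 + -1 * x) * h3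
      have h_o1_4 : x ^ 81 = (-1 * x ^ 7 + -1 * x ^ 6 + -1 * x ^ 5 + x ^ 3 + -1 * x + (-1 : GaloisField 3 m)) := by
        linear_combination ((x ^ 54  : GaloisField 3 m) + x ^ 27 * (-1 * x ^ 7 + -1 * x ^ 6 + -1 * x ^ 5 + -1 * x ^ 4 + x ^ 3 + x) + (-1 * x ^ 7 + -1 * x ^ 6 + -1 * x ^ 5 + -1 * x ^ 4 + x ^ 3 + x) ^ 2) * h_o1_3 + (-1 * x ^ 13 + x ^ 12 + x ^ 10 + x ^ 9 + -1 * x ^ 8 + -1 * x ^ 6 + -1 * x ^ 5 + x ^ 4 + x ^ 3 + -1 * x ^ 2 + (1 : GaloisField 3 m)) * ho1 + (-1 * x ^ 20 + -2 * x ^ 19 + -4 * x ^ 18 + -4 * x ^ 17 + -2 * x ^ 16 + x ^ 15 + 5 * x ^ 14 + 5 * x ^ 13 + 4 * x ^ 12 + -2 * x ^ 10 + -2 * x ^ 9 + -2 * x ^ 8 + x ^ 7 + -1 * x ^ 6 + x ^ 5) * h3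
      have h_o1_5 : x ^ 243 = (x ^ 6 + -1 * x ^ 3 + -1 * x ^ 2 + x + (1 : GaloisField 3 m)) := by
        linear_combination ((x ^ 162  : GaloisField 3 m) + x ^ 81 * (-1 * x ^ 7 + -1 * x ^ 6 + -1 * x ^ 5 + x ^ 3 + -1 * x + (-1 : GaloisField 3 m)) + (-1 * x ^ 7 + -1 * x ^ 6 + -1 * x ^ 5 + x ^ 3 + -1 * x + (-1 : GaloisField 3 m)) ^ 2) * h_o1_4 + (-1 * x ^ 13 + x ^ 12 + x ^ 10 + x ^ 9 + -1 * x ^ 8 + -1 * x ^ 6 + -1 * x ^ 5 + -1 * x ^ 4 + -1 * x ^ 2 + x + (1 : GaloisField 3 m)) * ho1 + (-1 * x ^ 20 + -2 * x ^ 19 + -3 * x ^ 18 + -2 * x ^ 17 + x ^ 16 + 2 * x ^ 15 + -4 * x ^ 13 + -6 * x ^ 12 + -2 * x ^ 11 + 3 * x ^ 10 + 3 * x ^ 9 + -1 * x ^ 8 + -5 * x ^ 7 + -4 * x ^ 6 + x ^ 5 + 3 * x ^ 4 + x ^ 3 + -1 * x ^ 2 + -2 * x + (-1 : GaloisField 3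 m)) * h3
      have h_o1_6 : x ^ 729 = (x ^ 6 + -1 * x ^ 4 + x ^ 3 + (-1 : GaloisField 3 m)) := by
        linear_combination ((x ^ 486  : GaloisField 3 m) + x ^ 243 * (x ^ 6 + -1 * x ^ 3 + -1 * x ^ 2 + x + (1 : GaloisField 3 m)) + (x ^ 6 + -1 * x ^ 3 + -1 * x ^ 2 + x + (1 : GaloisField 3 m)) ^ 2) * h_o1_5 + (x ^ 10 + -1 * x ^ 9 + x ^ 7 + x ^ 5 + x ^ 4 + -1 * x ^ 3 + x + (-1 : GaloisField 3 m)) * ho1 + (-1 * x ^ 15 + -1 * x ^ 14 + x ^ 12 + 2 * x ^ 11 + -1 * x ^ 10 + -4 * x ^ 9 + -2 * x ^ 8 + x ^ 7 + 3 * x ^ 6 + 2 * x ^ 5 + -2 * x ^ 4 + -3 * x ^ 3 + x + (1 : GaloisField 3 m)) * h3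
      have h_o1_7 : x ^ 2187 = (-1 * x ^ 7 + -1 * x ^ 6 + x ^ 5 + x ^ 3 + x ^ 2 + x + (-1 : GaloisField 3 m)) := by
        linear_combination ((x ^ 1458  : GaloisField 3 m) + x ^ 729 * (x ^ 6 + -1 * x ^ 4 + x ^ 3 + (-1 : GaloisField 3 m)) + (x ^ 6 + -1 * x ^ 4 + x ^ 3 + (-1 : GaloisField 3 m)) ^ 2) * h_o1_6 + (x ^ 10 + -1 * x ^ 9 + x ^ 7 + x ^ 5 + -1 * x) * ho1 + (-1 * x ^ 16 + x ^ 15 + x ^ 14 + -3 * x ^ 13 + -1 * x ^ 12 + x ^ 11 + x ^ 10 + -1 * x ^ 9 + -1 * x ^ 8 + 2 * x ^ 7 + -1 * x ^ 5 + -1 * x ^ 4 + x ^ 3) * h3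
      have h_o1_8 : x ^ 6561 = (x) := by
        linear_combination ((x ^ 4374  : GaloisField 3 m) + x ^ 2187 * (-1 * x ^ 7 + -1 * x ^ 6 + x ^ 5 + x ^ 3 + x ^ 2 + x + (-1 : GaloisField 3 m)) + (-1 * x ^ 7 + -1 * x ^ 6 + x ^ 5 + x ^ 3 + x ^ 2 + x + (-1 : GaloisField 3 m)) ^ 2) * h_o1_7 + (-1 * x ^ 13 + x ^ 12 + x ^ 10 + x ^ 9 + -1 * x ^ 8 + -1 * x ^ 7 + -1 * x ^ 5 + x ^ 4 + x ^ 2 + (-1 : GaloisField 3 m)) * ho1 + (-1 * x ^ 20 + x ^ 18 + 2 * x ^ 16 + 3 * x ^ 15 + -1 * x ^ 14 + -4 * x ^ 13 + -4 * x ^ 12 + -2 * x ^ 11 + -3 * x ^ 10 + 4 * x ^ 9 + 5 * x ^ 8 + 3 * x ^ 7 + -1 * x ^ 6 + x ^ 5 + -3 * x ^ 4 + -1 * x ^ 3 + x) * h3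
      have hpd : x ^ 3 ^ 8 = x := by norm_num; exact h_o1_8
      have hm8 : m % 8 = 2 ∨ m % 8 = 6 := by omega
      have hx9 : x ^ 9 = x := by
        rcases hm8 with hm8 | hm8
        · have := pow_mod_reduce hpd hcard
          rw [hm8] at this; norm_num at this; exact this
        · have h6 : x ^ 3 ^ 6 = x := by
            have := pow_mod_reduce hpd hcard
            rw [hm8] at this; exact this
          have := pow_mod_reduce h6 hpd
          norm_num at this; exact this
      exact absurd (by linear_combination (x ^ 8 + x ^ 6 + x ^ 5 + -1 * x ^ 4 + x ^ 3 + x ^ 2 + (1 : GaloisField 3 m)) * ho1 + (-1 * x ^ 7 + -1 * x ^ 6 + x ^ 5 + x ^ 4 + -1 * x ^ 2 + -1 * x + (1 : GaloisField 3 m)) * hx9 + (-1 * x ^ 14 + -1 * x ^ 13 + -1 * x ^ 9 + -2 * x ^ 8 + -1 * x ^ 7 + -1 * x ^ 3 + -1 * x ^ 2) * h3 : (1 : GaloisField 3 m) = 0) one_ne_zero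
    · -- octic 2
      exfalso
      have h_o2_0 : x ^ 1 = x := pow_one x
      have h_o2_1 : x ^ 3 = (x ^ 3) := by
        linear_combination ((x ^ 2  : GaloisField 3 m) + x * (x) + (x) ^ 2) * h_o2_0 + 0 * ho2 + 0 * h3
      have h_o2_2 : x ^ 9 = (-1 * x ^ 7 + -1 * x ^ 6 + x ^ 3 + x ^ 2 + (1 : GaloisField 3 m)) := by
        linear_combination ((x ^ 6  : GaloisField 3 m) + x ^ 3 * (x ^ 3) + (x ^ 3) ^ 2) * h_o2_1 + (x + (-1 : GaloisField 3 m)) * ho2 + (x ^ 7 + -1 * x ^ 2) * h3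
      have h_o2_3 : x ^ 27 = (-1 * x ^ 7 + -1 * x ^ 5 + -1 * x ^ 4 + -1 * x ^ 3 + x ^ 2 + x) := by
        linear_combination ((x ^ 18  : GaloisField 3 m) + x ^ 9 * (-1 * x ^ 7 + -1 * x ^ 6 + x ^ 3 + x ^ 2 + (1 : GaloisField 3 m)) + (-1 * x ^ 7 + -1 * x ^ 6 + x ^ 3 + x ^ 2 + (1 : GaloisField 3 m)) ^ 2) * h_o2_2 + (-1 * x ^ 13 + x ^ 12 + x ^ 11 + -1 * x ^ 10 + -1 * x ^ 9 + x ^ 7 + x ^ 6 + x ^ 5 + -1 * x ^ 2 + x + (1 : GaloisField 3 m)) * ho2 + (-1 * x ^ 20 + -2 * x ^ 19 + 2 * x ^ 17 + 3 * x ^ 16 + 2 * x ^ 15 + 2 * x ^ 14 + x ^ 13 + -3 * x ^ 12 + -3 * x ^ 11 + -2 * x ^ 10 + -3 * x ^ 9 + -2 * x ^ 8 + 2 * x ^ 5 + x ^ 4 + 2 * x ^ 3 + x ^ 2 + -1 * x) * h3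
      have h_o2_4 : x ^ 81 = (-1 * x ^ 7 + -1 * x ^ 6 + x ^ 5 + x + (-1 : GaloisField 3 m)) := by
        linear_combination ((x ^ 54  : GaloisField 3 m) + x ^ 27 * (-1 * x ^ 7 + -1 * x ^ 5 + -1 * x ^ 4 + -1 * x ^ 3 + x ^ 2 + x) + (-1 * x ^ 7 + -1 * x ^ 5 + -1 * x ^ 4 + -1 * x ^ 3 + x ^ 2 + x) ^ 2) * h_o2_3 + (-1 * x ^ 13 + x ^ 12 + x ^ 11 + x ^ 9 + -1 * x ^ 8 + x ^ 6 + x ^ 4 + -1 * x ^ 3 + x + (1 : GaloisField 3 m)) * ho2 + (-2 * x ^ 19 + -1 * x ^ 18 + -2 * x ^ 17 + -1 * x ^ 16 + -2 * x ^ 15 + -1 * x ^ 14 + x ^ 13 + 2 * x ^ 12 + 2 * x ^ 11 + 2 * x ^ 10 + 2 * x ^ 9 + -3 * x ^ 7 + -2 * x ^ 6 + -1 * x ^ 5 + x ^ 4 + x ^ 3 + -1 * x) * h3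
      have h_o2_5 : x ^ 243 = (x ^ 7 + -1 * x ^ 6 + -1 * x ^ 5 + x ^ 4 + x ^ 3 + -1 * x) := by
        linear_combination ((x ^ 162  : GaloisField 3 m) + x ^ 81 * (-1 * x ^ 7 + -1 * x ^ 6 + x ^ 5 + x + (-1 : GaloisField 3 m)) + (-1 * x ^ 7 + -1 * x ^ 6 + x ^ 5 + x + (-1 : GaloisField 3 m)) ^ 2) * h_o2_4 + (-1 * x ^ 13 + x ^ 12 + x ^ 11 + -1 * x ^ 10 + -1 * x ^ 9 + -1 * x ^ 7 + -1 * x ^ 3 + -1 * x + (-1 : GaloisField 3 m)) * ho2 + (-1 * x ^ 20 + -1 * x ^ 19 + 2 * x ^ 18 + x ^ 17 + -1 * x ^ 16 + x ^ 15 + 2 * x ^ 14 + -3 * x ^ 13 + -2 * x ^ 12 + 3 * x ^ 11 + -1 * x ^ 9 + 2 * x ^ 8 + 2 * x ^ 7 + -3 * x ^ 6 + x ^ 5 + -1 * x ^ 2 + 2 * x) * h3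
      have h_o2_6 : x ^ 729 = (-1 * x ^ 7 + -1 * x ^ 6 + -1 * x ^ 5 + -1 * x ^ 3 + -1 * x ^ 2 + x + (1 : GaloisField 3 m)) := by
        linear_combination ((x ^ 486  : GaloisField 3 m) + x ^ 243 * (x ^ 7 + -1 * x ^ 6 + -1 * x ^ 5 + x ^ 4 + x ^ 3 + -1 * x) + (x ^ 7 + -1 * x ^ 6 + -1 * x ^ 5 + x ^ 4 + x ^ 3 + -1 * x) ^ 2) * h_o2_5 + (x ^ 13 + -1 * x ^ 12 + -1 * x ^ 11 + -1 * x ^ 10 + -1 * x ^ 8 + x ^ 7 + -1 * x ^ 6 + x ^ 5 + (-1 : GaloisField 3 m)) * ho2 + (-1 * x ^ 20 + x ^ 19 + 3 * x ^ 18 + -1 * x ^ 17 + -4 * x ^ 16 + x ^ 15 + 5 * x ^ 14 + -7 * x ^ 12 + 5 * x ^ 10 + 3 * x ^ 9 + -3 * x ^ 8 + -1 * x ^ 7 + x ^ 6 + x ^ 5) * h3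
      have h_o2_7 : x ^ 2187 = (x ^ 6 + -1 * x ^ 5 + -1 * x ^ 3 + -1 * x ^ 2 + (1 : GaloisField 3 m)) := by
        linear_combination ((x ^ 1458  : GaloisField 3 m) + x ^ 729 * (-1 * x ^ 7 + -1 * x ^ 6 + -1 * x ^ 5 + -1 * x ^ 3 + -1 * x ^ 2 + x + (1 : GaloisField 3 m)) + (-1 * x ^ 7 + -1 * x ^ 6 + -1 * x ^ 5 + -1 * x ^ 3 + -1 * x ^ 2 + x + (1 : GaloisField 3 m)) ^ 2) * h_o2_6 + (-1 * x ^ 13 + x ^ 12 + x ^ 11 + -1 * x ^ 10 + -1 * x ^ 9 + -1 * x ^ 6 + -1 * x ^ 5 + x ^ 3 + x ^ 2) * ho2 + (-1 * x ^ 20 + -3 * x ^ 19 + -2 * x ^ 18 + -2 * x ^ 17 + -4 * x ^ 16 + -5 * x ^ 15 + -1 * x ^ 14 + 2 * x ^ 13 + 4 * x ^ 10 + 6 * x ^ 9 + 2 * x ^ 8 + -2 * x ^ 7 + 2 * x ^ 5 + -2 * x ^ 4 + -3 * x ^ 3 + x) * h3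
      have h_o2_8 : x ^ 6561 = (x) := by
        linear_combination ((x ^ 4374  : GaloisField 3 m) + x ^ 2187 * (x ^ 6 + -1 * x ^ 5 + -1 * x ^ 3 + -1 * x ^ 2 + (1 : GaloisField 3 m)) + (x ^ 6 + -1 * x ^ 5 + -1 * x ^ 3 + -1 * x ^ 2 + (1 : GaloisField 3 m)) ^ 2) * h_o2_7 + (x ^ 10 + -1 * x ^ 9 + -1 * x ^ 8 + -1 * x ^ 7 + -1 * x ^ 5 + -1 * x ^ 4 + x ^ 3 + x + (1 : GaloisField 3 m)) * ho2 + (-1 * x ^ 17 + 2 * x ^ 16 + -1 * x ^ 15 + x ^ 14 + x ^ 13 + 2 * x ^ 12 + -2 * x ^ 11 + -1 * x ^ 10 + -3 * x ^ 9 + -1 * x ^ 8 + x ^ 7 + 2 * x ^ 6 + 2 * x ^ 5 + x ^ 4 + -1 * x ^ 3 + -1 * x ^ 2 + -1 * x) * h3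
      have hpd : x ^ 3 ^ 8 = x := by norm_num; exact h_o2_8
      have hm8 : m % 8 = 2 ∨ m % 8 = 6 := by omega
      have hx9 : x ^ 9 = x := by
        rcases hm8 with hm8 | hm8
        · have := pow_mod_reduce hpd hcard
          rw [hm8] at this; norm_num at this; exact this
        · have h6 : x ^ 3 ^ 6 = x := by
            have := pow_mod_reduce hpd hcard
            rw [hm8] at this; exact this
          have := pow_mod_reduce h6 hpd
          norm_num at this; exact this
      exact absurd (by linear_combination (-1 * x ^ 8 + x ^ 7 + -1 * x ^ 6 + -1 * x ^ 4 + -1 * x ^ 2 + x + (1 : GaloisField 3 m)) * ho2 + (x ^ 7 + -1 * x ^ 5 + -1 * x ^ 4 + x ^ 2 + -1 * x + (-1 : GaloisField 3 m)) * hx9 + (x ^ 13 + x ^ 9 + -1 * x ^ 8 + x ^ 3 + -1 * x) * h3 : (1 : GaloisField 3 m) = 0) one_ne_zero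
  · intro hx
    subst hx
    simp [zero_pow (show e ≠ 0 by rw [he]; positivity)]
end

section
/- Let m be a positive integer with m ≡ 0 (mod 4) and m ≥ 4, let h = m/2 and e = 3^h + 5. Then the only element x of the finite field GF(3^m) satisfying (x+1)^e + x^e + 1 = 0 is x = 1. -/
theorem stmt_6 (m : ℕ) (hm : 0 < m) (hmod : m % 4 = 0) (hge : 4 ≤ m)
    (h e : ℕ) (hh : h = m / 2) (he : e = 3 ^ h + 5)
    (x : GaloisField 3 m) :
    (x + 1) ^ e + x ^ e + 1 = 0 ↔ x = 1 := by
  haveI : Fact (Nat.Prime 3) := ⟨by norm_num⟩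
  have h3 : (3 : GaloisField 3 m) = 0 := by
    have := CharP.cast_eq_zero (GaloisField 3 m) 3
    exact_mod_cast this
  constructor
  · intro heq
    by_contra hx1
    set y := x ^ (3 : ℕ) ^ h with hy
    -- y ^ 3^h = x
    have hyq : y ^ (3 : ℕ) ^ h = x := by
      haveI : Fintype (GaloisField 3 m) := Fintype.ofFinite _
      have hcard : Fintype.card (GaloisField 3 m) = 3 ^ m := by
        rw [← Nat.card_eq_fintype_card, GaloisField.card 3 m (by omega)]
      have hpow : (3 : ℕ) ^ h * 3 ^ h = 3 ^ m := by
        rw [← pow_add]; congr 1; omega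
      rw [hy, ← pow_mul, hpow, ← hcard]
      exact FiniteField.pow_card x
    -- rewrite the equation
    have heq2 : (y + 1) * (x + 1) ^ 5 + y * x ^ 5 + 1 = 0 := by
      have h1 : (x + 1) ^ e = (y + 1) * (x + 1) ^ 5 := by
        rw [he, pow_add]
        congr 1
        rw [add_pow_char_pow, one_pow]
      have h2 : x ^ e = y * x ^ 5 := by rw [he, pow_add, hy]
      rw [← h1, ← h2]; exact heq
    have heq3 : (1 - x) * (y * (x^4 - x^3 + x^2 + 1) - (x^4 + x^2 - x + 1)) = 0 := by
      linear_combination heq2 + (-x^5*y - x^4*y - 2*x^4 - 4*x^3*y - 3*x^3 - 3*x^2*y - 4*x^2 - 2*x*y - x - 1) * h3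
    have hxne : (1 : GaloisField 3 m) - x ≠ 0 := fun hc => hx1 (by linear_combination -hc)
    have hu : y * (x^4 - x^3 + x^2 + 1) - (x^4 + x^2 - x + 1) = 0 := by
      rcases mul_eq_zero.mp heq3 with hc | hc
      · exact absurd hc hxne
      · exact hc
    -- conjugate equation
    have hv : x * (y^4 - y^3 + y^2 + 1) - (y^4 + y^2 - y + 1) = 0 := by
      have hu' : y * (x^4 - x^3 + x^2 + 1) = x^4 + x^2 - x + 1 := by
        linear_combination hu
      have := congrArg (iterateFrobenius (GaloisField 3 m) 3 h) hu'
      simp only [map_mul, map_add, map_sub, map_pow, map_one, iterateFrobenius_def] at this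
      rw [hyq] at this
      rw [← hy] at this
      linear_combination this
    -- the resultant-style identity
    have hG : (x - 1)^5 * ((x^2 + 1) * (x^2 + x - 1) * (x^2 - x - 1))^2 = 0 := by
      linear_combination (x^13*y^3 + x^13*y + x^13 - 4*x^12*y^3 - 4*x^12*y - 2*x^12 + 9*x^11*y^3 + 9*x^11*y + 3*x^11 - 13*x^10*y^3 - 2*x^10*y^2 - 15*x^10*y - 5*x^10 + 16*x^9*y^3 + 5*x^9*y^2 + 19*x^9*y + 8*x^9 - 18*x^8*y^3 - 9*x^8*y^2 - 24*x^8*y - 14*x^8 + 19*x^7*y^3 + 9*x^7*y^2 + 26*x^7*y + 16*x^7 - 16*x^6*y^3 - 11*x^6*y^2 - 28*x^6*y - 17*x^6 + 12*x^5*y^3 + 9*x^5*y^2 + 22*x^5*y + 18*x^5 - 9*x^4*y^3 - 9*x^4*y^2 - 19*x^4*y - 17*x^4 + 6*x^3*y^3 + 4*x^3*y^2 + 12*x^3*y + 13*x^3 - 3*x^2*y^3 - 4*x^2*y^2 - 8*x^2*y - 8*x^2 + x*y^3 + x*y^2 + 3*x*y + 5*x - y^3 - y^2 - 2*y - 1)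 * hu - (x^16 - 4*x^15 + 10*x^14 - 16*x^13 + 23*x^12 - 28*x^11 + 34*x^10 - 32*x^9 + 31*x^8 - 24*x^7 + 22*x^6 - 12*x^5 + 10*x^4 - 4*x^3 + 4*x^2 + 1) * hv + (x^17 - 4*x^16 + 8*x^15 - 8*x^14 + 6*x^13 - 12*x^12 + 28*x^11 - 52*x^10 + 73*x^9 - 73*x^8 + 52*x^7 - 28*x^6 + 12*x^5 - 6*x^4 + 8*x^3 - 8*x^2 + 4*x - 1) * h3
    have hx1' : x - 1 ≠ 0 := sub_ne_zero.mpr hx1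
    have hW : (x^2 + 1) * (x^2 + x - 1) * (x^2 - x - 1) = 0 := by
      rcases mul_eq_zero.mp hG with hc | hc
      · exact absurd (pow_eq_zero_iff (by norm_num)|>.mp hc) hx1'
      · exact pow_eq_zero_iff (by norm_num) |>.mp hc
    -- x^9 = x
    have hx9 : x ^ 9 = x := by
      have : x ^ 9 - x = (x^3 - x) * ((x^2 + 1) * (x^2 + x - 1) * (x^2 - x - 1)) + (x^7 - x^3) * 3 := by
        ring
      rw [hW, h3] at this
      simp at this
      linear_combination this
    -- since h is even, y = x
    have hyx : y = x := by
      obtain ⟨k, hk⟩ : ∃ k, h = 2 * k := ⟨h / 2, by omega⟩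
      have h9 : ∀ j : ℕ, x ^ (9 : ℕ) ^ j = x := by
        intro j
        induction j with
        | zero => simp
        | succ n ih => rw [pow_succ, pow_mul, ih, hx9]
      have : (3 : ℕ) ^ h = 9 ^ k := by
        rw [hk, pow_mul]; norm_num
      rw [hy, this, h9 k]
    -- conclude
    rw [hyx] at hu
    have : (x - 1) ^ 5 = 0 := by
      linear_combination hu + (-x^4 + 3*x^3 - 3*x^2 + x) * h3
    exact hx1' (pow_eq_zero_iff (by norm_num) |>.mp this)
  · rintro rfl
    have h11 : (1 : GaloisField 3 m) + 1 = -1 := by linear_combination h3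
    have heven : Even e := by
      rw [he]
      refine Odd.add_odd ?_ (by decide)
      exact Odd.pow (by decide)
    rw [h11, one_pow, Even.neg_one_pow heven]
    linear_combination h3
end

section
/- Let m be a positive integer with m ≡ 2 (mod 4) and m ≥ 6, let h = (m+2)/2 and e = 3^h + 5. Then the only element x of the finite field GF(3^m) satisfying (x+1)^e + x^e + 1 = 0 is x = 1. -/
set_option maxHeartbeats 4000000 in
theorem stmt_7 (m : ℕ) (hm : 0 < m) (hmod : m % 4 = 2) (hge : 6 ≤ m)
    (h e : ℕ) (hh : h = (m + 2) / 2) (he : e = 3 ^ h + 5)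
    (x : GaloisField 3 m) :
    (x + 1) ^ e + x ^ e + 1 = 0 ↔ x = 1 := by
  haveI : Fact (Nat.Prime 3) := ⟨by norm_num⟩
  haveI : Fintype (GaloisField 3 m) := Fintype.ofFinite (GaloisField 3 m)
  have h3 : (3 : GaloisField 3 m) = 0 := by
    exact_mod_cast CharP.cast_eq_zero (GaloisField 3 m) 3
  have hcard : ∀ a : GaloisField 3 m, a ^ (3 ^ m) = a := by
    intro a
    have h1 : Fintype.card (GaloisField 3 m) = 3 ^ m := by
      rw [Fintype.card_eq_nat_card]
      exact GaloisField.card 3 m (by omega)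
    rw [← h1]
    exact FiniteField.pow_card a
  have hiter : ∀ (a : GaloisField 3 m) (k : ℕ), a ^ (3 ^ k) = a →
      ∀ (j r : ℕ), a ^ (3 ^ (k * j + r)) = a ^ (3 ^ r) := by
    intro a k hak j r
    induction j with
    | zero => simp
    | succ j ih =>
      have e1 : k * (j + 1) + r = (k * j + r) + k := by ring
      calc a ^ 3 ^ (k * (j + 1) + r) = (a ^ 3 ^ (k * j + r)) ^ 3 ^ k := by
            rw [← pow_mul, ← pow_add, e1]
        _ = (a ^ 3 ^ r) ^ 3 ^ k := by rw [ih]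
        _ = (a ^ 3 ^ k) ^ 3 ^ r := by rw [← pow_mul, mul_comm, pow_mul]
        _ = a ^ 3 ^ r := by rw [hak]
  constructor
  · intro heq
    by_contra hx1
    set u := x ^ 3 ^ h with hu
    have heven : h % 2 = 0 := by omega
    have h2h : h + h = m + 2 := by omega
    rw [he, pow_add, pow_add, add_pow_char_pow, one_pow, ← hu] at heq
    have key : (x - 1) * (u * (2*x^4 + x^3 + 2*x^2 + 2) + (x^4 + x^2 + 2*x + 1)) = 0 := by
      linear_combination heq - (1 + u + 2*x + x*u + 3*x^2 + 4*x^2*u + 3*x^3 + 3*x^3*u + 2*x^4 + 2*x^4*u) * h3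
    have hE1 : u * (2*x^4 + x^3 + 2*x^2 + 2) + (x^4 + x^2 + 2*x + 1) = 0 := by
      rcases mul_eq_zero.mp key with h1 | h1
      · exact absurd (sub_eq_zero.mp h1) hx1
      · exact h1
    have hu9 : u ^ 3 ^ h = x ^ 9 := by
      rw [hu, ← pow_mul, ← pow_add, h2h, pow_add, pow_mul, hcard x]
      norm_num
    have hE2 : x ^ 9 * (2*u^4 + u^3 + 2*u^2 + 2) + (u^4 + u^2 + 2*u + 1) = 0 := by
      have hmap := congrArg (iterateFrobenius (GaloisField 3 m) 3 h) hE1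
      simp only [map_add, map_mul, map_pow, map_ofNat, map_one, map_zero,
        iterateFrobenius_def] at hmap
      rw [hu9, ← hu] at hmap
      linear_combination hmap
    have hP : (x - 1) * (x^6 + x^4 + x^2 + 1) * (1 + 2*x^2 + x^3 + x^4 + x^6 + 2*x^7 + x^8 + 2*x^9 + x^10 + 2*x^11 + x^12 + x^14 + x^15 + 2*x^16 + x^18) = 0 := by
      linear_combination (2*x^4 + x^3 + 2*x^2 + 2)^4 * hE2 + (1 + 2*u + u^2 + u^3 + 2*x + x*u + 2*x*u^2 + x^2*u + x^3 + x^3*u + 2*x^3*u^2 + 2*x^4 + 2*x^4*u^2 + 2*x^5 + 2*x^5*u^2 + x^6 + 2*x^6*u + x^6*u^2 + x^6*u^3 + 2*x^7*u + 2*x^8*u + x^9 + x^9*u^2 + x^9*u^3 + x^10*u + 2*x^10*u^2 + 2*x^11 + x^11*u + x^11*u^2 + x^12 + 2*x^12*u^2 + x^12*u^3 + x^13 + 2*x^13*u + x^13*u^2 + x^14 + 2*x^14*u + x^14*u^2 + 2*x^15 + 2*x^15*u + 2*x^15*u^3 + 2*x^16 + x^16*u + 2*x^17 + x^17*u + x^18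 + x^18*u^2 + x^18*u^3 + 2*x^19 + x^19*u + 2*x^19*u^2 + x^20 + 2*x^20*u + 2*x^20*u^2 + 2*x^21 + 2*x^21*u + 2*x^21*u^3) * hE1 + ((-6) + (-12)*u + (-7)*u^2 + (-1)*u^3 + (-6)*u^4 + (-1)*x + (-3)*x*u + (-2)*x*u^2 + (-2)*x*u^3 + (-24)*x^2 + (-45)*x^2*u + (-25)*x^2*u^2 + (-1)*x^2*u^3 + (-22)*x^2*u^4 + (-11)*x^3 + (-25)*x^3*u + (-14)*x^3*u^2 + (-3)*x^3*u^3 + (-11)*x^3*u^4 + (-56)*x^4 + (-111)*x^4*u + (-58)*x^4*u^2 + (-3)*x^4*u^3 + (-54)*x^4*u^4 + (-34)*x^5 + (-68)*x^5*u + (-37)*x^5*u^2 + (-4)*x^5*u^3 + (-32)*x^5*u^4 + (-97)*x^6 + (-190)*x^6*u + (-98)*x^6*u^2 + (-3)*x^6*u^3 + (-94)*x^6*u^4 + (-65)*x^7 + (-133)*x^7*u + (-68)*x^7*u^2 + (-4)*x^7*u^3 + (-64)*x^7*u^4 + (-119)*x^8 + (-240)*x^8*u + (-121)*x^8*u^2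 + (-3)*x^8*u^3 + (-118)*x^8*u^4 + (-89)*x^9 + (-159)*x^9*u + (-91)*x^9*u^2 + (-8)*x^9*u^3 + (-89)*x^9*u^4 + (-110)*x^10 + (-221)*x^10*u + (-115)*x^10*u^2 + (-3)*x^10*u^3 + (-110)*x^10*u^4 + (-111)*x^11 + (-137)*x^11*u + (-114)*x^11*u^2 + (-23)*x^11*u^3 + (-110)*x^11*u^4 + (-92)*x^12 + (-142)*x^12*u + (-95)*x^12*u^2 + (-14)*x^12*u^3 + (-92)*x^12*u^4 + (-144)*x^13 + (-73)*x^13*u + (-146)*x^13*u^2 + (-57)*x^13*u^3 + (-142)*x^13*u^4 + (-94)*x^14 + (-63)*x^14*u + (-98)*x^14*u^2 + (-36)*x^14*u^3 + (-94)*x^14*u^4 + (-200)*x^15 + (-28)*x^15*u + (-202)*x^15*u^2 + (-96)*x^15*u^3 + (-199)*x^15*u^4 + (-136)*x^16 + (-16)*x^16*u + (-137)*x^16*u^2 + (-68)*x^16*u^3 + (-134)*x^16*u^4 + (-237)*x^17 + (-6)*x^17*u + (-239)*x^17*u^2 + (-119)*x^17*u^3 + (-236)*x^17*u^4 + (-158)*x^18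 + (-5)*x^18*u + (-158)*x^18*u^2 + (-79)*x^18*u^3 + (-156)*x^18*u^4 + (-220)*x^19 + (-6)*x^19*u + (-223)*x^19*u^2 + (-112)*x^19*u^3 + (-220)*x^19*u^4 + (-137)*x^20 + (-5)*x^20*u + (-138)*x^20*u^2 + (-69)*x^20*u^3 + (-134)*x^20*u^4 + (-141)*x^21 + (-7)*x^21*u + (-144)*x^21*u^2 + (-72)*x^21*u^3 + (-141)*x^21*u^4 + (-72)*x^22 + (-4)*x^22*u + (-72)*x^22*u^2 + (-39)*x^22*u^3 + (-70)*x^22*u^4 + (-59)*x^23 + (-4)*x^23*u + (-62)*x^23*u^2 + (-32)*x^23*u^3 + (-60)*x^23*u^4 + (-22)*x^24 + (-2)*x^24*u + (-24)*x^24*u^2 + (-12)*x^24*u^3 + (-22)*x^24*u^4 + (-11)*x^25 + (-2)*x^25*u + (-12)*x^25*u^2 + (-6)*x^25*u^3 + (-12)*x^25*u^4) * h3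
    have hx1' : x - 1 ≠ 0 := fun hc => hx1 (sub_eq_zero.mp hc)
    rcases mul_eq_zero.mp hP with h1 | hC3
    · rcases mul_eq_zero.mp h1 with h2 | hC2
      · exact hx1' h2
      · -- C2 case : x ∈ GF(9)
        have hx9 : x ^ 3 ^ 2 = x := by
          have h9 : x ^ 9 = x := by linear_combination (2*x + x^3) * hC2 + ((-1)*x + (-1)*x^3 + (-1)*x^5 + (-1)*x^7) * h3
          norm_num
          exact h9
        have hux : u = x := by
          rw [hu]
          have hit := hiter x 2 hx9 (h / 2) 0
          have e2 : 2 * (h / 2) + 0 = h := by omega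
          rw [e2] at hit
          simpa using hit
        rw [hux] at hE1
        have hone : (1 : GaloisField 3 m) = 0 := by
          linear_combination (2*x + 2*x^2) * hC2 + (1 + 2*x^3) * hE1 + ((-2)*x + (-1)*x^2 + (-2)*x^3 + (-4)*x^4 + (-2)*x^5 + (-2)*x^6 + (-2)*x^7 + (-2)*x^8) * h3
        exact one_ne_zero hone
    · -- C3 case : x ∈ GF(27)
      have hx27 : x ^ 3 ^ 3 = x := by
        have h27 : x ^ 27 = x := by linear_combination (2*x + 2*x^3 + x^4 + 2*x^6 + x^7 + x^9) * hC3 + ((-1)*x + (-2)*x^3 + (-1)*x^4 + (-2)*x^5 + (-2)*x^6 + (-2)*x^7 + (-3)*x^8 + (-3)*x^9 + (-4)*x^10 + (-3)*x^11 + (-4)*x^12 + (-4)*x^13 + (-3)*x^14 + (-4)*x^15 + (-3)*x^16 + (-4)*x^17 + (-3)*x^18 + (-3)*x^19 + (-2)*x^20 + (-2)*x^21 + (-2)*x^22 + (-1)*x^23 + (-1)*x^24 + (-1)*x^25) * h3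
        norm_num
        exact h27
      by_cases h3m : m % 3 = 0
      · have hux : u = x ^ 3 := by
          rw [hu]
          have hit := hiter x 3 hx27 (h / 3) 1
          have e2 : 3 * (h / 3) + 1 = h := by omega
          rw [e2] at hit
          simpa using hit
        rw [hux] at hE1
        have hone : (1 : GaloisField 3 m) = 0 := by
          linear_combination (1 + 2*x^2 + 2*x^3 + 2*x^4 + x^6) * hC3 + (2*x^2 + 2*x^3 + 2*x^4 + 2*x^5 + 2*x^6 + 2*x^7 + 2*x^8 + 2*x^9 + x^10 + x^11 + x^12 + x^13 + x^14 + x^15 + x^16 + x^17) * hE1 + ((-2)*x^2 + (-3)*x^3 + (-5)*x^4 + (-6)*x^5 + (-8)*x^6 + (-8)*x^7 + (-9)*x^8 + (-11)*x^9 + (-11)*x^10 + (-11)*x^11 + (-10)*x^12 + (-10)*x^13 + (-9)*x^14 + (-8)*x^15 + (-7)*x^16 + (-6)*x^17 + (-7)*x^18 + (-5)*x^19 + (-5)*x^20 + (-3)*x^21 + (-3)*x^22 + (-1)*x^23 + (-1)*x^24) * h3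
        exact one_ne_zero hone
      · have hx3 : x ^ 3 = x := by
          have hm3 := hcard x
          rcases (by omega : m % 3 = 1 ∨ m % 3 = 2) with h1 | h1
          · have hit := hiter x 3 hx27 (m / 3) 1
            have e2 : 3 * (m / 3) + 1 = m := by omega
            rw [e2] at hit
            rw [hit] at hm3
            simpa using hm3
          · have hit := hiter x 3 hx27 (m / 3) 2
            have e2 : 3 * (m / 3) + 2 = m := by omega
            rw [e2] at hit
            rw [hit] at hm3
            have h9 : x ^ 9 = x := by
              norm_num at hm3
              exact hm3
            have h27 : x ^ 27 = x := by
              norm_num at hx27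
              exact hx27
            calc x ^ 3 = (x ^ 9) ^ 3 := by rw [h9]
              _ = x ^ 27 := by ring
              _ = x := h27
        have hfac : x * (x - 1) * (x + 1) = 0 := by linear_combination hx3
        rcases mul_eq_zero.mp hfac with h1 | h1
        · rcases mul_eq_zero.mp h1 with h2 | h2
          · rw [h2] at hC3
            have hone : (1 : GaloisField 3 m) = 0 := by linear_combination hC3
            exact one_ne_zero hone
          · exact hx1' h2
        · have hxm : x = -1 := by linear_combination h1
          rw [hxm] at hC3
          have hone : (1 : GaloisField 3 m) = 0 := by linear_combination hC3 - h3
          exact one_ne_zero hone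
  · intro hx
    subst hx
    have h2 : (1 : GaloisField 3 m) + 1 = -1 := by linear_combination h3
    have hodd : Odd (3 ^ h) := Odd.pow (by decide)
    have hev : Even e := by
      rw [he]
      exact hodd.add_odd (by decide)
    rw [h2, one_pow, hev.neg_one_pow]
    linear_combination h3
end

section
/- Let m and h be positive integers with 2 ≤ h ≤ m-1 and let e = 3^h + 5. If θ is an element of GF(3^m) not lying in the prime subfield GF(3) and θ satisfies (θ+1)^e - θ^e - 1 = 0, then θ^(3^h - 1) · (θ^4 - θ^3 - θ^2 + θ - 1) = θ^4 - θ^3 + θ^2 + θ - 1. -/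
theorem stmt_8 (m h : ℕ) (hm : 0 < m) (hh2 : 2 ≤ h) (hhm : h ≤ m - 1)
    (e : ℕ) (he : e = 3 ^ h + 5)
    (θ : GaloisField 3 m)
    (hθ : θ ∉ Set.range (algebraMap (ZMod 3) (GaloisField 3 m)))
    (heq : (θ + 1) ^ e - θ ^ e - 1 = 0) :
    θ ^ (3 ^ h - 1) * (θ ^ 4 - θ ^ 3 - θ ^ 2 + θ - 1) = θ ^ 4 - θ ^ 3 + θ ^ 2 + θ - 1 := by
  have hθ0 : θ ≠ 0 := by
    intro h0
    exact hθ ⟨0, by simp [h0]⟩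
  have hchar : (3 : GaloisField 3 m) = 0 := by
    have := ZMod.natCast_self 3
    calc (3 : GaloisField 3 m) = ((3 : ℕ) : GaloisField 3 m) := by norm_num
    _ = 0 := by exact_mod_cast CharP.cast_eq_zero (GaloisField 3 m) 3
  subst he
  rw [pow_add, pow_add, add_pow_char_pow] at heq
  have hq1 : 3 ^ h = 3 ^ h - 1 + 1 := (Nat.sub_add_cancel (Nat.one_le_pow _ _ (by norm_num))).symm
  rw [hq1, pow_succ] at heq
  have key : θ * (θ ^ (3 ^ h - 1) * (θ ^ 4 - θ ^ 3 - θ ^ 2 + θ - 1))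
      = θ * (θ ^ 4 - θ ^ 3 + θ ^ 2 + θ - 1) := by
    linear_combination (-1 : GaloisField 3 m) * heq +
      (θ ^ (3 ^ h - 1) * (2 * θ ^ 5 + 4 * θ ^ 4 + 3 * θ ^ 3 + θ ^ 2 + θ) + θ ^ 5 + 3 * θ ^ 4
        + 3 * θ ^ 3 + 2 * θ ^ 2 + θ + θ - θ * θ ^ (3 ^ h - 1) + θ ^ 2 + θ ^ 2 * θ ^ (3 ^ h - 1) - θ ^ 4 - θ ^ 4 * θ ^ (3 ^ h - 1) - θ ^ 5) * hchar
  exact mul_left_cancel₀ hθ0 key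
end

section
/- Let m and h be positive integers with 2 ≤ h ≤ m-1 and let e = 3^h + 5. If θ is an element of GF(3^m) not lying in the prime subfield GF(3) and θ satisfies (θ+1)^e + θ^e + 1 = 0, then θ^(3^h) · (θ^4 - θ^3 + θ^2 + 1) = θ^4 + θ^2 - θ + 1, and moreover θ^4 - θ^3 + θ^2 + 1 ≠ 0. -/
/-!
Since `3 ^ h` is a power of the characteristic, `(θ + 1) ^ (3 ^ h) = t + 1` with `t = θ ^ (3 ^ h)`,
so the hypothesis is linear in `t`. In characteristic 3 the resulting expression
`(t + 1) (θ + 1) ^ 5 + t θ ^ 5 + 1` factors as `-(θ - 1) (t P(θ) - Q(θ))`, where `P` and `Q` are the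
two quartics of the statement; this gives the identity once `θ ≠ 1`. If moreover `P(θ) = 0`, then
`Q(θ) = 0` as well, and `Q - P = θ ^ 3 - θ` forces `θ ∈ GF(3)`.
-/

theorem add_one_mul_add_one_pow_five_add_mul_pow_five_add_one {R : Type*} [CommRing R]
    [CharP R 3] (t x : R) :
    (t + 1) * (x + 1) ^ 5 + t * x ^ 5 + 1 =
      -((x - 1) * (t * (x ^ 4 - x ^ 3 + x ^ 2 + 1) - (x ^ 4 + x ^ 2 - x + 1))) := by
  have h3 : (3 : R) = 0 := by exact_mod_cast CharP.cast_eq_zero R 3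
  linear_combination
    (t * (x ^ 5 + x ^ 4 + 4 * x ^ 3 + 3 * x ^ 2 + 2 * x) +
      2 * x ^ 4 + 3 * x ^ 3 + 4 * x ^ 2 + x + 1) * h3

theorem pow_three_pow_mul_eq_of_add_one_pow_add_pow_add_one_eq_zero {R : Type*} [CommRing R]
    [IsDomain R] [CharP R 3] (h : ℕ) {x : R} (hx : x ≠ 1)
    (heq : (x + 1) ^ (3 ^ h + 5) + x ^ (3 ^ h + 5) + 1 = 0) :
    x ^ (3 ^ h) * (x ^ 4 - x ^ 3 + x ^ 2 + 1) = x ^ 4 + x ^ 2 - x + 1 := by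
  have hfrob : (x + 1) ^ (3 ^ h) = x ^ (3 ^ h) + 1 := by
    rw [add_pow_char_pow, one_pow]
  rw [pow_add, pow_add, hfrob, add_one_mul_add_one_pow_five_add_mul_pow_five_add_one,
    neg_eq_zero] at heq
  exact sub_eq_zero.mp ((mul_eq_zero.mp heq).resolve_left (sub_ne_zero.mpr hx))

theorem mem_range_algebraMap_zmod_three_of_pow_three_eq_self {K : Type*} [CommRing K] [IsDomain K]
    [Algebra (ZMod 3) K] {x : K} (hx : x ^ 3 = x) : x ∈ Set.range (algebraMap (ZMod 3) K) := by
  have hfactor : x * (x - 1) * (x + 1) = 0 := by linear_combination hx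
  rcases mul_eq_zero.mp hfactor with h | h
  · rcases mul_eq_zero.mp h with h | h
    · exact ⟨0, by rw [map_zero, h]⟩
    · exact ⟨1, by rw [map_one, sub_eq_zero.mp h]⟩
  · exact ⟨-1, by rw [map_neg, map_one, eq_neg_of_add_eq_zero_left h]⟩

theorem stmt_9_general (m h : ℕ)
    (e : ℕ) (he : e = 3 ^ h + 5)
    (θ : GaloisField 3 m)
    (hθ : θ ∉ Set.range (algebraMap (ZMod 3) (GaloisField 3 m)))
    (heq : (θ + 1) ^ e + θ ^ e + 1 = 0) :
    θ ^ (3 ^ h) * (θ ^ 4 - θ ^ 3 + θ ^ 2 + 1) = θ ^ 4 + θ ^ 2 - θ + 1 ∧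
    θ ^ 4 - θ ^ 3 + θ ^ 2 + 1 ≠ 0 := by
  have hcube : θ ^ 3 ≠ θ := fun h => hθ (mem_range_algebraMap_zmod_three_of_pow_three_eq_self h)
  have hone : θ ≠ 1 := by rintro rfl; exact hcube (one_pow 3)
  subst he
  have main := pow_three_pow_mul_eq_of_add_one_pow_add_pow_add_one_eq_zero h hone heq
  refine ⟨main, fun hP => hcube ?_⟩
  linear_combination (θ ^ (3 ^ h) - 1) * hP - main

theorem stmt_9 (m h : ℕ) (hm : 0 < m) (hh2 : 2 ≤ h) (hhm : h ≤ m - 1)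
    (e : ℕ) (he : e = 3 ^ h + 5)
    (θ : GaloisField 3 m)
    (hθ : θ ∉ Set.range (algebraMap (ZMod 3) (GaloisField 3 m)))
    (heq : (θ + 1) ^ e + θ ^ e + 1 = 0) :
    θ ^ (3 ^ h) * (θ ^ 4 - θ ^ 3 + θ ^ 2 + 1) = θ ^ 4 + θ ^ 2 - θ + 1 ∧
    θ ^ 4 - θ ^ 3 + θ ^ 2 + 1 ≠ 0 :=
  stmt_9_general m h e he θ hθ heq
end
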